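/- arXiv:2605.26285 — 8 statements merged into one kernel-verified Lean document; each statement's English description precedes it below -/
import Mathlib

section
/- Let Φ : E × ℝ × ℝ → E, written Φ(a,t,s), be twice continuously differentiable jointly in all variables, and let u, v : E × ℝ × ℝ → E be continuously differentiable maps such that for all (a,t,s): ∂_s Φ(a,t,s) = v(Φ(a,t,s),t,s) and ∂_t Φ(a,t,s) = u(Φ(a,t,s),t,s). Then at every point of the form x = Φ(a,t,s) the vanishing Lie-bracket (compatibility) identity holds: ∂_s u(x,t,s) + D_x u(x,t,s)[v(x,t,s)] − D_x v(x,t,s)[u(x,t,s)] − ∂_t v(x,t,s) = 0, where D_x denotes the Fréchet derivative in the state variable. -/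
/-!
Fix `a` and let `g (t, s) = Φ (a, t, s)`. Differentiating `∂ₛg = v (g, t, s)` in `t` and
`∂ₜg = u (g, t, s)` in `s` by the chain rule expresses the two mixed second derivatives of `g`
as `Dₓv[u] + ∂ₜv` and `Dₓu[v] + ∂ₛu`; since `g` is `C²` they agree (Schwarz).
-/

section

variable {E P G : Type*} [NormedAddCommGroup E] [NormedSpace ℝ E]
  [NormedAddCommGroup P] [NormedSpace ℝ P] [NormedAddCommGroup G] [NormedSpace ℝ G]

theorem fderiv_apply_pair_eq_add {F : E × P → G} {x : E} {q : P}
    (hF : DifferentiableAt ℝ F (x, q)) (y : E) (w : P) :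
    fderiv ℝ F (x, q) (y, w) =
      fderiv ℝ (fun y' => F (y', q)) x y + fderiv ℝ (fun q' => F (x, q')) q w := by
  have hx : HasFDerivAt (fun y' => F (y', q)) ((fderiv ℝ F (x, q)).comp (.inl ℝ E P)) x :=
    hF.hasFDerivAt.comp x (hasFDerivAt_prodMk_left x q)
  have hq : HasFDerivAt (fun q' => F (x, q')) ((fderiv ℝ F (x, q)).comp (.inr ℝ E P)) q :=
    hF.hasFDerivAt.comp q (hasFDerivAt_prodMk_right x q)
  simp [hx.fderiv, hq.fderiv, ← map_add]

theorem fderiv_fderiv_apply_of_fderiv_apply_eq {g : P → E} {F : E × P → E} {p w : P}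
    (hg : ContDiffAt ℝ 2 g p) (hF : DifferentiableAt ℝ F (g p, p))
    (h : ∀ q, fderiv ℝ g q w = F (g q, q)) (w' : P) :
    fderiv ℝ (fderiv ℝ g) p w' w = fderiv ℝ F (g p, p) (fderiv ℝ g p w', w') := by
  have hg' : DifferentiableAt ℝ (fderiv ℝ g) p :=
    (hg.fderiv_right (m := 1) le_rfl).differentiableAt one_ne_zero
  have hL : HasFDerivAt (fun q => fderiv ℝ g q w)
      ((ContinuousLinearMap.apply ℝ E w).comp (fderiv ℝ (fderiv ℝ g) p)) p :=
    (ContinuousLinearMap.apply ℝ E w).hasFDerivAt.comp p hg'.hasFDerivAt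
  have hR : HasFDerivAt (fun q => F (g q, q))
      ((fderiv ℝ F (g p, p)).comp ((fderiv ℝ g p).prod (ContinuousLinearMap.id ℝ P))) p :=
    hF.hasFDerivAt.comp (f := fun q => (g q, q)) p
      ((hg.differentiableAt two_ne_zero).hasFDerivAt.prodMk (hasFDerivAt_id p))
  rw [funext h] at hL
  simpa using congr($(hL.unique hR) w')

theorem fderiv_velocity_fields_comm {g : P → E} {U V : E × P → E} {p w w' : P}
    (hg : ContDiffAt ℝ 2 g p) (hU : DifferentiableAt ℝ U (g p, p))
    (hV : DifferentiableAt ℝ V (g p, p))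
    (hgU : ∀ q, fderiv ℝ g q w = U (g q, q)) (hgV : ∀ q, fderiv ℝ g q w' = V (g q, q)) :
    fderiv ℝ U (g p, p) (V (g p, p), w') = fderiv ℝ V (g p, p) (U (g p, p), w) := by
  rw [← hgU, ← hgV, ← fderiv_fderiv_apply_of_fderiv_apply_eq hg hU hgU,
    ← fderiv_fderiv_apply_of_fderiv_apply_eq hg hV hgV, (hg.isSymmSndFDerivAt (by simp)).eq]

end

section

variable {G : Type*} [NormedAddCommGroup G] [NormedSpace ℝ G] {f : ℝ × ℝ → G} {t s : ℝ}

theorem fderiv_apply_one_zero_eq_deriv (hf : DifferentiableAt ℝ f (t, s)) :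
    fderiv ℝ f (t, s) (1, 0) = deriv (fun t' => f (t', s)) t :=
  (hf.hasFDerivAt.comp_hasDerivAt t ((hasDerivAt_id t).prodMk (hasDerivAt_const t s))).deriv.symm

theorem fderiv_apply_zero_one_eq_deriv (hf : DifferentiableAt ℝ f (t, s)) :
    fderiv ℝ f (t, s) (0, 1) = deriv (fun s' => f (t, s')) s :=
  (hf.hasFDerivAt.comp_hasDerivAt s ((hasDerivAt_const s t).prodMk (hasDerivAt_id s))).deriv.symm

end

/-- **Vanishing Lie-bracket (compatibility) identity for two-parameter flows.**
If `Φ(a,t,s)` is a `C²` two-parameter flow whose sampling-time velocity is `v`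
(`∂ₛΦ = v ∘ Φ`) and whose physics-time velocity is `u` (`∂ₜΦ = u ∘ Φ`), with `u, v`
continuously differentiable, then at every point `x = Φ(a,t,s)` we have
`∂ₛu(x,t,s) + Dₓu(x,t,s)[v(x,t,s)] − Dₓv(x,t,s)[u(x,t,s)] − ∂ₜv(x,t,s) = 0`. -/
theorem compatibility_identity (d : ℕ)
    (Φ u v : EuclideanSpace ℝ (Fin d) × ℝ × ℝ → EuclideanSpace ℝ (Fin d))
    (hΦ : ContDiff ℝ 2 Φ) (hu : ContDiff ℝ 1 u) (hv : ContDiff ℝ 1 v)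
    (hflow_s : ∀ (a : EuclideanSpace ℝ (Fin d)) (t s : ℝ),
      deriv (fun s' => Φ (a, t, s')) s = v (Φ (a, t, s), t, s))
    (hflow_t : ∀ (a : EuclideanSpace ℝ (Fin d)) (t s : ℝ),
      deriv (fun t' => Φ (a, t', s)) t = u (Φ (a, t, s), t, s)) :
    ∀ (a : EuclideanSpace ℝ (Fin d)) (t s : ℝ),
      deriv (fun s' => u (Φ (a, t, s), t, s')) s
        + fderiv ℝ (fun y => u (y, t, s)) (Φ (a, t, s)) (v (Φ (a, t, s), t, s))
        - fderiv ℝ (fun y => v (y, t, s)) (Φ (a, t, s)) (u (Φ (a, t, s), t, s))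
        - deriv (fun t' => v (Φ (a, t, s), t', s)) t = 0 := by
  intro a t s
  have hg : ContDiff ℝ 2 (fun p : ℝ × ℝ => Φ (a, p)) := by fun_prop
  have hud : Differentiable ℝ u := hu.differentiable one_ne_zero
  have hvd : Differentiable ℝ v := hv.differentiable one_ne_zero
  have key := fderiv_velocity_fields_comm (p := (t, s)) hg.contDiffAt (hud _) (hvd _)
    (fun ⟨t', s'⟩ => by
      rw [fderiv_apply_one_zero_eq_deriv (hg.differentiable two_ne_zero _), hflow_t])
    (fun ⟨t', s'⟩ => by
      rw [fderiv_apply_zero_one_eq_deriv (hg.differentiable two_ne_zero _), hflow_s])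
  rw [fderiv_apply_pair_eq_add (hud _), fderiv_apply_pair_eq_add (hvd _),
    fderiv_apply_zero_one_eq_deriv (by fun_prop), fderiv_apply_one_zero_eq_deriv (by fun_prop)]
    at key
  rw [sub_sub, sub_eq_zero, add_comm, key]
end

section
/- Let ν be a finite Borel measure on E, let u : E × ℝ → E be continuous, and let Φ : E × ℝ → E be continuous such that for each a ∈ E the map t ↦ Φ(a,t) is differentiable with ∂_t Φ(a,t) = u(Φ(a,t),t). Define ρ(t) as the pushforward of ν under a ↦ Φ(a,t). Fix t₀ ∈ ℝ and assume there exists a ν-integrable function g : E → ℝ and a neighborhood I of t₀ such that ‖u(Φ(a,t),t)‖ ≤ g(a) for all a ∈ E and t ∈ I. Then for every smooth compactly supported test function φ : E → ℝ, the function t ↦ ∫ φ dρ(t) is differentiable at t₀ with derivative ∫ ⟪∇φ(x), u(x,t₀)⟫ dρ(t₀)(x); that is, ρ and u satisfy the continuity equation ∂_t ρ + ∇·(ρ u) = 0 in the weak (distributional) sense. -/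
open MeasureTheory
open scoped RealInnerProductSpace

/-- **Weak continuity equation for the time marginals of a flow.**
Let `ν` be a finite Borel measure, `u` a continuous velocity field, and `Φ` a continuous flow
with `∂ₜΦ(a,t) = u(Φ(a,t),t)`. Let `ρ(t) := Φ(·,t)♯ν`. Under a local integrable domination of
`‖u(Φ(a,t),t)‖` near `t₀`, for every smooth compactly supported `φ` the map `t ↦ ∫ φ dρ(t)`
is differentiable at `t₀` with derivative `∫ ⟪∇φ(x), u(x,t₀)⟫ dρ(t₀)(x)`. -/
theorem continuity_equation_weak (d : ℕ) (ν : Measure (EuclideanSpace ℝ (Fin d)))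
    [IsFiniteMeasure ν]
    (u : EuclideanSpace ℝ (Fin d) × ℝ → EuclideanSpace ℝ (Fin d))
    (Φ : EuclideanSpace ℝ (Fin d) × ℝ → EuclideanSpace ℝ (Fin d))
    (hu : Continuous u) (hΦ : Continuous Φ)
    (hflow : ∀ (a : EuclideanSpace ℝ (Fin d)) (t : ℝ),
      HasDerivAt (fun t' => Φ (a, t')) (u (Φ (a, t), t)) t)
    (ρ : ℝ → Measure (EuclideanSpace ℝ (Fin d)))
    (hρ : ∀ t, ρ t = Measure.map (fun a => Φ (a, t)) ν)
    (t₀ : ℝ)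
    (hdom : ∃ (g : EuclideanSpace ℝ (Fin d) → ℝ) (I : Set ℝ), Integrable g ν ∧ I ∈ nhds t₀ ∧
      ∀ (a : EuclideanSpace ℝ (Fin d)), ∀ t ∈ I, ‖u (Φ (a, t), t)‖ ≤ g a) :
    ∀ (φ : EuclideanSpace ℝ (Fin d) → ℝ), ContDiff ℝ (⊤ : ℕ∞) φ → HasCompactSupport φ →
      HasDerivAt (fun t => ∫ x, φ x ∂(ρ t))
        (∫ x, ⟪gradient φ x, u (x, t₀)⟫ ∂(ρ t₀)) t₀ := by
  intro φ hφ hφsupp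
  obtain ⟨g, I, hg_int, hI, hg⟩ := hdom
  obtain ⟨ε, ε_pos, hball⟩ := Metric.mem_nhds_iff.mp hI
  -- continuity of the gradient
  have hgrad_cont : Continuous (gradient φ) := by
    have h1 : Continuous (fderiv ℝ φ) := hφ.continuous_fderiv (by simp)
    exact ((InnerProductSpace.toDual ℝ (EuclideanSpace ℝ (Fin d))).symm.continuous).comp h1
  -- a bound on the gradient
  obtain ⟨C, hC⟩ : ∃ C, ∀ x, ‖gradient φ x‖ ≤ C := by
    have hsupp : HasCompactSupport (gradient φ) := by
      have h2 := hφsupp.fderiv (𝕜 := ℝ)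
      exact h2.comp_left (g := (InnerProductSpace.toDual ℝ (EuclideanSpace ℝ (Fin d))).symm)
        (map_zero _)
    exact hgrad_cont.bounded_above_of_compact_support hsupp
  have hC0 : 0 ≤ C := le_trans (norm_nonneg _) (hC 0)
  -- pointwise derivative via chain rule
  have hfderiv : ∀ (x v : EuclideanSpace ℝ (Fin d)), fderiv ℝ φ x v = ⟪gradient φ x, v⟫ := by
    intro x v
    rw [gradient, ← InnerProductSpace.toDual_apply_apply,
      (InnerProductSpace.toDual ℝ (EuclideanSpace ℝ (Fin d))).apply_symm_apply]
  have hderiv : ∀ (a : EuclideanSpace ℝ (Fin d)) (t : ℝ),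
      HasDerivAt (fun t' => φ (Φ (a, t'))) ⟪gradient φ (Φ (a, t)), u (Φ (a, t), t)⟫ t := by
    intro a t
    have h1 := ((hφ.differentiable (by simp)) (Φ (a, t))).hasFDerivAt
    have h2 := h1.comp_hasDerivAt t (hflow a t)
    rwa [hfderiv] at h2
  -- measurability of Φ(·,t)
  have hΦm : ∀ t : ℝ, Continuous (fun a : EuclideanSpace ℝ (Fin d) => Φ (a, t)) := by
    intro t; exact hΦ.comp (continuous_id.prodMk continuous_const)
  -- the integrals as integrals over ν
  have hmap : ∀ t : ℝ, ∫ x, φ x ∂(ρ t) = ∫ a, φ (Φ (a, t)) ∂ν := by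
    intro t
    rw [hρ t, integral_map (hΦm t).aemeasurable hφ.continuous.aestronglyMeasurable]
  have hmap' : ∫ x, ⟪gradient φ x, u (x, t₀)⟫ ∂(ρ t₀)
      = ∫ a, ⟪gradient φ (Φ (a, t₀)), u (Φ (a, t₀), t₀)⟫ ∂ν := by
    rw [hρ t₀]
    refine integral_map (hΦm t₀).aemeasurable ?_
    exact (hgrad_cont.inner (hu.comp (continuous_id.prodMk continuous_const))).aestronglyMeasurable
  -- apply the dominated differentiation theorem
  have key := hasDerivAt_integral_of_dominated_loc_of_deriv_le (μ := ν)
    (F := fun t a => φ (Φ (a, t)))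
    (F' := fun t a => ⟪gradient φ (Φ (a, t)), u (Φ (a, t), t)⟫)
    (x₀ := t₀) (bound := fun a => C * g a) (Metric.ball_mem_nhds t₀ ε_pos)
    (Filter.Eventually.of_forall fun t =>
      (hφ.continuous.comp (hΦm t)).aestronglyMeasurable)
    ?_ ?_ ?_ (hg_int.const_mul C) ?_
  · rw [hmap']
    exact key.2.congr_of_eventuallyEq (Filter.Eventually.of_forall fun t => hmap t)
  · -- integrability of F t₀
    obtain ⟨M, hM⟩ := hφ.continuous.bounded_above_of_compact_support hφsupp
    exact (integrable_const M).mono'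
      ((hφ.continuous.comp (hΦm t₀)).aestronglyMeasurable)
      (Filter.Eventually.of_forall fun a => hM _)
  · exact ((hgrad_cont.comp (hΦm t₀)).inner
      (hu.comp ((hΦm t₀).prodMk continuous_const))).aestronglyMeasurable
  · -- bound
    refine Filter.Eventually.of_forall fun a t ht => ?_
    calc ‖⟪gradient φ (Φ (a, t)), u (Φ (a, t), t)⟫‖
        ≤ ‖gradient φ (Φ (a, t))‖ * ‖u (Φ (a, t), t)‖ := norm_inner_le_norm _ _
      _ ≤ C * g a := mul_le_mul (hC _) (hg a t (hball ht)) (norm_nonneg _) hC0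
  · exact Filter.Eventually.of_forall fun a t ht => hderiv a t
end

section
/- Let Φ : E × ℝ × ℝ → E be twice continuously differentiable jointly in all variables with Φ(a,t,0) = a for all a, t, and let v : E × ℝ × ℝ → E be continuously differentiable with ∂_s Φ(a,t,s) = v(Φ(a,t,s),t,s) for all (a,t,s). Suppose that for every (a,t,s) the Fréchet derivative D_a Φ(a,t,s) of a ↦ Φ(a,t,s) is an invertible continuous linear map E → E. Then for all (a,t,s) with s ≥ 0: ∂_t Φ(a,t,s) = D_a Φ(a,t,s) [ ∫₀ˢ (D_a Φ(a,t,σ))^{-1} (∂_t v)(Φ(a,t,σ),t,σ) dσ ]. -/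
open Set intervalIntegral

set_option maxHeartbeats 1000000


/-- **Closed-form expression for the physics-time derivative of the flow.**
For a `C²` two-parameter flow `Φ` with `Φ(a,t,0) = a`, sampling-time velocity `v`
(`∂ₛΦ = v ∘ Φ`, `v` of class `C¹`), and invertible state-Jacobians `D_aΦ(a,t,s)`,
one has for `s ≥ 0`:
`∂ₜΦ(a,t,s) = D_aΦ(a,t,s) [ ∫₀ˢ (D_aΦ(a,t,σ))⁻¹ (∂ₜv)(Φ(a,t,σ),t,σ) dσ ]`. -/
theorem physics_time_derivative_formula (d : ℕ)
    (Φ v : EuclideanSpace ℝ (Fin d) × ℝ × ℝ → EuclideanSpace ℝ (Fin d))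
    (hΦ : ContDiff ℝ 2 Φ) (hv : ContDiff ℝ 1 v)
    (hinit : ∀ (a : EuclideanSpace ℝ (Fin d)) (t : ℝ), Φ (a, t, 0) = a)
    (hflow_s : ∀ (a : EuclideanSpace ℝ (Fin d)) (t s : ℝ),
      deriv (fun s' => Φ (a, t, s')) s = v (Φ (a, t, s), t, s))
    (hinv : ∀ (a : EuclideanSpace ℝ (Fin d)) (t s : ℝ),
      ∃ L : EuclideanSpace ℝ (Fin d) ≃L[ℝ] EuclideanSpace ℝ (Fin d),
        (L : EuclideanSpace ℝ (Fin d) →L[ℝ] EuclideanSpace ℝ (Fin d)) =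
          fderiv ℝ (fun a' => Φ (a', t, s)) a) :
    ∀ (a : EuclideanSpace ℝ (Fin d)) (t s : ℝ), 0 ≤ s →
      deriv (fun t' => Φ (a, t', s)) t =
        (fderiv ℝ (fun a' => Φ (a', t, s)) a)
          (∫ σ in (0:ℝ)..s,
            (fderiv ℝ (fun a' => Φ (a', t, σ)) a).inverse
              (deriv (fun t' => v (Φ (a, t, σ), t', σ)) t)) := by
  intro a t s₀ hs₀
  -- basic differentiability facts
  have hΦd : Differentiable ℝ Φ := hΦ.differentiable two_ne_zero
  have hvd : Differentiable ℝ v := hv.differentiable one_ne_zero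
  set F : ((EuclideanSpace ℝ (Fin d)) × ℝ × ℝ) → ((EuclideanSpace ℝ (Fin d)) × ℝ × ℝ →L[ℝ] (EuclideanSpace ℝ (Fin d))) := fderiv ℝ Φ with hFdef
  set G : ((EuclideanSpace ℝ (Fin d)) × ℝ × ℝ) → ((EuclideanSpace ℝ (Fin d)) × ℝ × ℝ →L[ℝ] (EuclideanSpace ℝ (Fin d))) := fderiv ℝ v with hGdef
  have hF1 : ContDiff ℝ 1 F := hΦ.fderiv_right (le_refl 2)
  have hFd : Differentiable ℝ F := hF1.differentiable one_ne_zero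
  have hFc : Continuous F := hF1.continuous
  have hGc : Continuous G := hv.continuous_fderiv one_ne_zero
  set e1 : (EuclideanSpace ℝ (Fin d)) →L[ℝ] (EuclideanSpace ℝ (Fin d)) × ℝ × ℝ := (ContinuousLinearMap.id ℝ (EuclideanSpace ℝ (Fin d))).prod 0 with he1
  have he1app : ∀ x : (EuclideanSpace ℝ (Fin d)), e1 x = (x, 0, 0) := fun x => rfl
  -- curves and partial derivatives
  have curveS : ∀ (a' : (EuclideanSpace ℝ (Fin d))) (t' s : ℝ),
      HasDerivAt (fun s' : ℝ => ((a', t', s') : (EuclideanSpace ℝ (Fin d)) × ℝ × ℝ)) (0, 0, 1) s := by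
    intro a' t' s
    exact (hasDerivAt_const s a').prodMk ((hasDerivAt_const s t').prodMk (hasDerivAt_id s))
  have curveT : ∀ (a' : (EuclideanSpace ℝ (Fin d))) (t s : ℝ),
      HasDerivAt (fun t' : ℝ => ((a', t', s) : (EuclideanSpace ℝ (Fin d)) × ℝ × ℝ)) (0, 1, 0) t := by
    intro a' t s
    exact (hasDerivAt_const t a').prodMk ((hasDerivAt_id t).prodMk (hasDerivAt_const t s))
  have curveA : ∀ (a : (EuclideanSpace ℝ (Fin d))) (t s : ℝ),
      HasFDerivAt (fun a' : (EuclideanSpace ℝ (Fin d)) => ((a', t, s) : (EuclideanSpace ℝ (Fin d)) × ℝ × ℝ)) e1 a := by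
    intro a t s
    exact (hasFDerivAt_id a).prodMk (hasFDerivAt_const (t, s) a)
  have pderivT : ∀ (a : (EuclideanSpace ℝ (Fin d))) (t s : ℝ),
      HasDerivAt (fun t' => Φ (a, t', s)) (F (a, t, s) (0, 1, 0)) t := by
    intro a t s
    exact (hΦd _).hasFDerivAt.comp_hasDerivAt t (curveT a t s)
  have pderivS : ∀ (a : (EuclideanSpace ℝ (Fin d))) (t s : ℝ),
      HasDerivAt (fun s' => Φ (a, t, s')) (F (a, t, s) (0, 0, 1)) s := by
    intro a t s
    exact (hΦd _).hasFDerivAt.comp_hasDerivAt s (curveS a t s)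
  have pderivA : ∀ (a : (EuclideanSpace ℝ (Fin d))) (t s : ℝ),
      HasFDerivAt (fun a' => Φ (a', t, s)) (F (a, t, s) ∘L e1) a := by
    intro a t s
    exact (hΦd _).hasFDerivAt.comp a (curveA a t s)
  have JacEq : ∀ (t' s : ℝ), fderiv ℝ (fun a' => Φ (a', t', s)) a = F (a, t', s) ∘L e1 :=
    fun t' s => (pderivA a t' s).fderiv
  -- the flow ODE in fderiv form
  have key : ∀ (a' : EuclideanSpace ℝ (Fin d)) (t' s' : ℝ),
      F (a', t', s') (0, 0, 1) = v (Φ (a', t', s'), t', s') := by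
    intro a' t' s'
    rw [← (pderivS a' t' s').deriv, hflow_s]
  -- abbreviations along the fixed trajectory
  set J : ℝ → ((EuclideanSpace ℝ (Fin d)) →L[ℝ] (EuclideanSpace ℝ (Fin d))) := fun s => F (a, t, s) ∘L e1 with hJdef
  set y : ℝ → (EuclideanSpace ℝ (Fin d)) := fun s => F (a, t, s) (0, 1, 0) with hydef
  set A : ℝ → ((EuclideanSpace ℝ (Fin d)) →L[ℝ] (EuclideanSpace ℝ (Fin d))) := fun s => G (Φ (a, t, s), t, s) ∘L e1 with hAdef
  set b : ℝ → (EuclideanSpace ℝ (Fin d)) := fun s => G (Φ (a, t, s), t, s) (0, 1, 0) with hbdef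
  -- second derivative and its symmetry
  set F' : ((EuclideanSpace ℝ (Fin d)) × ℝ × ℝ) → ((EuclideanSpace ℝ (Fin d)) × ℝ × ℝ →L[ℝ] (EuclideanSpace ℝ (Fin d)) × ℝ × ℝ →L[ℝ] (EuclideanSpace ℝ (Fin d))) := fderiv ℝ F with hF'def
  have hsymm : ∀ (p : (EuclideanSpace ℝ (Fin d)) × ℝ × ℝ) (w u : (EuclideanSpace ℝ (Fin d)) × ℝ × ℝ), F' p w u = F' p u w := by
    intro p w u
    exact second_derivative_symmetric (fun q => (hΦd q).hasFDerivAt) (hFd p).hasFDerivAt w u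
  -- derivative of s ↦ F (a, t, s)
  have hdFs : ∀ s : ℝ, HasDerivAt (fun s' => F (a, t, s')) (F' (a, t, s) (0, 0, 1)) s := by
    intro s
    exact (hFd _).hasFDerivAt.comp_hasDerivAt s (curveS a t s)
  have hdFt : ∀ s : ℝ, HasDerivAt (fun t' => F (a, t', s)) (F' (a, t, s) (0, 1, 0)) t := by
    intro s
    exact (hFd _).hasFDerivAt.comp_hasDerivAt t (curveT a t s)
  have hdFa : ∀ s : ℝ, HasFDerivAt (fun a' => F (a', t, s)) (F' (a, t, s) ∘L e1) a := by
    intro s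
    exact (hFd _).hasFDerivAt.comp a (curveA a t s)
  -- the ODE satisfied by y
  have hy : ∀ s : ℝ, HasDerivAt y (A s (y s) + b s) s := by
    intro s
    have h1 : HasDerivAt y (F' (a, t, s) (0, 0, 1) (0, 1, 0)) s := by
      have := (hdFs s).clm_apply (hasDerivAt_const s ((0, 1, 0) : (EuclideanSpace ℝ (Fin d)) × ℝ × ℝ))
      simpa using this
    have h2 : F' (a, t, s) (0, 0, 1) (0, 1, 0) = F' (a, t, s) (0, 1, 0) (0, 0, 1) :=
      hsymm _ _ _
    -- compute F' (0,1,0) (0,0,1) = A s (y s) + b s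
    have h3 : HasDerivAt (fun t' => F (a, t', s) (0, 0, 1))
        (F' (a, t, s) (0, 1, 0) (0, 0, 1)) t := by
      have := (hdFt s).clm_apply (hasDerivAt_const t ((0, 0, 1) : (EuclideanSpace ℝ (Fin d)) × ℝ × ℝ))
      simpa using this
    have h4 : HasDerivAt (fun t' => v (Φ (a, t', s), t', s))
        (G (Φ (a, t, s), t, s) (y s, 1, 0)) t := by
      refine (hvd _).hasFDerivAt.comp_hasDerivAt t ?_
      exact (pderivT a t s).prodMk ((hasDerivAt_id t).prodMk (hasDerivAt_const t s))
    have h5 : (fun t' => F (a, t', s) (0, 0, 1)) = fun t' => v (Φ (a, t', s), t', s) := by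
      funext t'; exact key a t' s
    have h6 : F' (a, t, s) (0, 1, 0) (0, 0, 1) = G (Φ (a, t, s), t, s) (y s, 1, 0) := by
      rw [h5] at h3
      exact h3.unique h4
    have h7 : G (Φ (a, t, s), t, s) (y s, 1, 0) = A s (y s) + b s := by
      have : ((y s, 1, 0) : (EuclideanSpace ℝ (Fin d)) × ℝ × ℝ) = (y s, 0, 0) + (0, 1, 0) := by simp
      rw [this, map_add]
      rfl
    rw [← h7, ← h6, ← h2]
    exact h1
  -- the ODE satisfied by J
  have hJ : ∀ s : ℝ, HasDerivAt J (A s ∘L J s) s := by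
    intro s
    have h1 : HasDerivAt J (F' (a, t, s) (0, 0, 1) ∘L e1) s := by
      have hcomp : HasFDerivAt (fun M : (EuclideanSpace ℝ (Fin d)) × ℝ × ℝ →L[ℝ] (EuclideanSpace ℝ (Fin d)) => M ∘L e1)
          ((ContinuousLinearMap.compL ℝ (EuclideanSpace ℝ (Fin d)) ((EuclideanSpace ℝ (Fin d)) × ℝ × ℝ) (EuclideanSpace ℝ (Fin d))).flip e1)
          (F (a, t, s)) :=
        ((ContinuousLinearMap.compL ℝ (EuclideanSpace ℝ (Fin d)) ((EuclideanSpace ℝ (Fin d)) × ℝ × ℝ) (EuclideanSpace ℝ (Fin d))).flip e1).hasFDerivAt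
      have := hcomp.comp_hasDerivAt s (hdFs s)
      exact this
    have h2 : F' (a, t, s) (0, 0, 1) ∘L e1 = A s ∘L J s := by
      refine ContinuousLinearMap.ext fun x => ?_
      have hx1 : (F' (a, t, s) ∘L e1) x (0, 0, 1) = F' (a, t, s) (x, 0, 0) (0, 0, 1) := rfl
      have h3 : HasFDerivAt (fun a' => F (a', t, s) (0, 0, 1))
          ((ContinuousLinearMap.apply ℝ (EuclideanSpace ℝ (Fin d)) ((0, 0, 1) : (EuclideanSpace ℝ (Fin d)) × ℝ × ℝ)) ∘L (F' (a, t, s) ∘L e1)) a :=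
        (ContinuousLinearMap.apply ℝ (EuclideanSpace ℝ (Fin d)) ((0, 0, 1) : (EuclideanSpace ℝ (Fin d)) × ℝ × ℝ)).hasFDerivAt.comp a (hdFa s)
      have h4 : HasFDerivAt (fun a' => v (Φ (a', t, s), t, s))
          (G (Φ (a, t, s), t, s) ∘L ((J s).prod 0)) a := by
        refine (hvd _).hasFDerivAt.comp a ?_
        exact (pderivA a t s).prodMk (hasFDerivAt_const (t, s) a)
      have h5 : (fun a' => F (a', t, s) (0, 0, 1)) = fun a' => v (Φ (a', t, s), t, s) := by
        funext a'; exact key a' t s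
      rw [h5] at h3
      have h6 := h3.unique h4
      have h7 := congrArg (fun (M : (EuclideanSpace ℝ (Fin d)) →L[ℝ] (EuclideanSpace ℝ (Fin d))) => M x) h6
      simp only [ContinuousLinearMap.comp_apply, ContinuousLinearMap.apply_apply,
        ContinuousLinearMap.prod_apply, ContinuousLinearMap.zero_apply] at h7 ⊢
      calc F' (a, t, s) (0, 0, 1) (e1 x) = F' (a, t, s) (e1 x) (0, 0, 1) := hsymm _ _ _
        _ = G (Φ (a, t, s), t, s) (J s x, 0) := h7
        _ = A s (J s x) := rfl
    rw [← h2]; exact h1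
  -- invertibility data
  have hJinv : ∀ s : ℝ, ∃ L : (EuclideanSpace ℝ (Fin d)) ≃L[ℝ] (EuclideanSpace ℝ (Fin d)), (L : (EuclideanSpace ℝ (Fin d)) →L[ℝ] (EuclideanSpace ℝ (Fin d))) = J s := by
    intro s
    obtain ⟨L, hL⟩ := hinv a t s
    exact ⟨L, by rw [hL, JacEq]⟩
  have hJJinv : ∀ (s : ℝ) (x : (EuclideanSpace ℝ (Fin d))), J s ((J s).inverse x) = x := by
    intro s x
    obtain ⟨L, hL⟩ := hJinv s
    rw [← hL, ContinuousLinearMap.inverse_equiv]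
    exact L.apply_symm_apply x
  -- continuity
  have hΦtraj : Continuous fun s : ℝ => Φ (a, t, s) :=
    hΦ.continuous.comp (by fun_prop)
  have hJc : Continuous J := by
    apply Continuous.clm_comp _ continuous_const
    exact hFc.comp (by fun_prop)
  have hAc : Continuous A := by
    apply Continuous.clm_comp _ continuous_const
    exact hGc.comp (by fun_prop)
  have hbc : Continuous b := by
    apply Continuous.clm_apply _ continuous_const
    exact hGc.comp (by fun_prop)
  have hJinvc : Continuous fun s => (J s).inverse := by
    rw [continuous_iff_continuousAt]
    intro s
    obtain ⟨L, hL⟩ := hJinv s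
    have hunit : ∃ u : ((EuclideanSpace ℝ (Fin d)) →L[ℝ] (EuclideanSpace ℝ (Fin d)))ˣ, (u : (EuclideanSpace ℝ (Fin d)) →L[ℝ] (EuclideanSpace ℝ (Fin d))) = J s := by
      refine ⟨⟨J s, (J s).inverse, ?_, ?_⟩, rfl⟩
      · ext x
        simp [ContinuousLinearMap.mul_apply, hJJinv s x]
      · ext x
        rw [← hL, ContinuousLinearMap.inverse_equiv]
        simp [ContinuousLinearMap.mul_apply]
    obtain ⟨u, hu⟩ := hunit
    have : ContinuousAt Ring.inverse (J s) := by
      rw [← hu]; exact NormedRing.inverse_continuousAt u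
    have hcomp : ContinuousAt (fun s' => Ring.inverse (J s')) s :=
      this.comp hJc.continuousAt
    rw [ContinuousLinearMap.ringInverse_eq_inverse] at hcomp
    exact hcomp
  set c : ℝ → (EuclideanSpace ℝ (Fin d)) := fun σ => (J σ).inverse (b σ) with hcdef
  have hcc : Continuous c := hJinvc.clm_apply hbc
  set w : ℝ → (EuclideanSpace ℝ (Fin d)) := fun s => ∫ σ in (0:ℝ)..s, c σ with hwdef
  have hw : ∀ s : ℝ, HasDerivAt w (c s) s := by
    intro s
    exact intervalIntegral.integral_hasDerivAt_right (hcc.intervalIntegrable 0 s)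
      (hcc.stronglyMeasurableAtFilter _ _) hcc.continuousAt
  set z : ℝ → (EuclideanSpace ℝ (Fin d)) := fun s => J s (w s) with hzdef
  have hz : ∀ s : ℝ, HasDerivAt z (A s (z s) + b s) s := by
    intro s
    have := (hJ s).clm_apply (hw s)
    simpa [hcdef, hJJinv s (b s)] using this
  -- initial conditions
  have hy0 : y 0 = 0 := by
    have h1 : (fun t' => Φ (a, t', 0)) = fun _ : ℝ => a := by
      funext t'; exact hinit a t'
    have := (pderivT a t 0).deriv
    rw [h1] at this
    simp only [deriv_const'] at this
    rw [hydef]; exact this.symm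
  have hz0 : z 0 = 0 := by
    simp [hzdef, hwdef]
  -- uniqueness via Grönwall
  have hyz : y s₀ = z s₀ := by
    -- bound on A over [0, s₀]
    obtain ⟨C, hC⟩ := isCompact_Icc.exists_bound_of_continuousOn (f := A)
      hAc.continuousOn (α := ℝ) (s := Icc 0 s₀)
    set C' : ℝ := max C 0 with hC'def
    set K : NNReal := ⟨C', le_max_right _ _⟩ with hKdef
    set proj : ℝ → ℝ := fun u => max 0 (min u s₀) with hproj
    have hprojmem : ∀ u : ℝ, proj u ∈ Icc 0 s₀ := by
      intro u
      constructor
      · exact le_max_left _ _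
      · exact max_le hs₀ (min_le_right _ _)
    set vf : ℝ → (EuclideanSpace ℝ (Fin d)) → (EuclideanSpace ℝ (Fin d)) := fun u x => A (proj u) x + b (proj u) with hvf
    have hlip : ∀ u : ℝ, LipschitzWith K (vf u) := by
      intro u
      have h2 : ‖A (proj u)‖₊ ≤ K := by
        have := (hC _ (hprojmem u)).trans (le_max_left C 0)
        exact this
      have h1 : LipschitzWith K fun x => A (proj u) x := (A (proj u)).lipschitz.weaken h2
      refine LipschitzWith.of_dist_le_mul fun x₁ x₂ => ?_
      simpa [hvf, dist_add_right] using h1.dist_le_mul x₁ x₂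
    have heq : EqOn y z (Icc 0 s₀) := by
      refine ODE_solution_unique (v := vf) hlip
        (fun s _ => ((hy s).continuousAt.continuousWithinAt))
        (fun s hs => ?_)
        (fun s _ => ((hz s).continuousAt.continuousWithinAt))
        (fun s hs => ?_) (hy0.trans hz0.symm)
      · have hps : proj s = s := by
          simp only [hproj]
          rw [min_eq_left hs.2.le, max_eq_right hs.1]
        have := (hy s).hasDerivWithinAt (s := Ici s)
        simpa [hvf, hps] using this
      · have hps : proj s = s := by
          simp only [hproj]
          rw [min_eq_left hs.2.le, max_eq_right hs.1]
        have := (hz s).hasDerivWithinAt (s := Ici s)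
        simpa [hvf, hps] using this
    exact heq ⟨hs₀, le_rfl⟩
  -- conclude
  have hLHS : deriv (fun t' => Φ (a, t', s₀)) t = y s₀ := (pderivT a t s₀).deriv
  have hbEq : ∀ σ : ℝ, deriv (fun t' => v (Φ (a, t, σ), t', σ)) t = b σ := by
    intro σ
    have : HasDerivAt (fun t' => v (Φ (a, t, σ), t', σ)) (b σ) t := by
      refine (hvd _).hasFDerivAt.comp_hasDerivAt t ?_
      exact (hasDerivAt_const t (Φ (a, t, σ))).prodMk ((hasDerivAt_id t).prodMk (hasDerivAt_const t σ))
    exact this.deriv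
  rw [hLHS, hyz]
  simp only [JacEq, hbEq]
  rfl
end

section
/- Let Φ : E × ℝ × ℝ → E be twice continuously differentiable jointly in all variables with Φ(a,t,0) = a for all a, t, and let v : E × ℝ × ℝ → E be continuously differentiable with ∂_s Φ(a,t,s) = v(Φ(a,t,s),t,s). Let u : E × ℝ × ℝ → E be continuously differentiable with u(x,t,0) = 0 for all x, t, and suppose u satisfies the compatibility identity ∂_s u(x,t,s) + D_x u(x,t,s)[v(x,t,s)] = D_x v(x,t,s)[u(x,t,s)] + ∂_t v(x,t,s) for all (x,t,s) with s ∈ [0,1]. Then ∂_t Φ(a,t,s) = u(Φ(a,t,s),t,s) for all a, t and s ∈ [0,1]; that is, u is the physics-time velocity of the flow Φ. (Both s ↦ ∂_t Φ(a,t,s) and s ↦ u(Φ(a,t,s),t,s) solve the same linear ODE w'(s) = ∂_t v(Φ(a,t,s),t,s) + D_x v(Φ(a,t,s),t,s)[w(s)] with initial value 0.) -/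
open Set

section Helpers

variable {E F : Type*} [NormedAddCommGroup E] [NormedSpace ℝ E]
  [NormedAddCommGroup F] [NormedSpace ℝ F]

private lemma hasFDerivAt_incl_x (t s : ℝ) (x : E) :
    HasFDerivAt (fun y : E => ((y, t, s) : E × ℝ × ℝ))
      (ContinuousLinearMap.inl ℝ E (ℝ × ℝ)) x := by
  have h : (fun y : E => ((y, t, s) : E × ℝ × ℝ))
      = fun y => (ContinuousLinearMap.inl ℝ E (ℝ × ℝ)) y + ((0 : E), t, s) := by
    funext y
    simp [Prod.ext_iff]
  rw [h]
  exact ((ContinuousLinearMap.inl ℝ E (ℝ × ℝ)).hasFDerivAt).add_const _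

private lemma partial_x (f : E × ℝ × ℝ → F) {x : E} {t s : ℝ}
    (hf : DifferentiableAt ℝ f (x, t, s)) :
    fderiv ℝ (fun y => f (y, t, s)) x
      = (fderiv ℝ f (x, t, s)).comp (ContinuousLinearMap.inl ℝ E (ℝ × ℝ)) :=
  (hf.hasFDerivAt.comp x (hasFDerivAt_incl_x t s x)).fderiv

private lemma hasDerivAt_partial_t (f : E × ℝ × ℝ → F) {x : E} {t s : ℝ}
    (hf : DifferentiableAt ℝ f (x, t, s)) :
    HasDerivAt (fun t' => f (x, t', s)) (fderiv ℝ f (x, t, s) (0, 1, 0)) t := by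
  have hc : HasDerivAt (fun t' : ℝ => ((x, t', s) : E × ℝ × ℝ)) ((0 : E), (1 : ℝ), (0 : ℝ)) t :=
    HasDerivAt.prodMk (hasDerivAt_const t x) ((hasDerivAt_id t).prodMk (hasDerivAt_const t s))
  exact hf.hasFDerivAt.comp_hasDerivAt t hc

private lemma hasDerivAt_partial_s (f : E × ℝ × ℝ → F) {x : E} {t s : ℝ}
    (hf : DifferentiableAt ℝ f (x, t, s)) :
    HasDerivAt (fun s' => f (x, t, s')) (fderiv ℝ f (x, t, s) (0, 0, 1)) s := by
  have hc : HasDerivAt (fun s' : ℝ => ((x, t, s') : E × ℝ × ℝ)) ((0 : E), (0 : ℝ), (1 : ℝ)) s :=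
    HasDerivAt.prodMk (hasDerivAt_const s x) (HasDerivAt.prodMk (hasDerivAt_const s t) (hasDerivAt_id s))
  exact hf.hasFDerivAt.comp_hasDerivAt s hc

private lemma fderiv_decomp_t (f : E × ℝ × ℝ → F) {x : E} {t s : ℝ}
    (hf : DifferentiableAt ℝ f (x, t, s)) (w : E) :
    fderiv ℝ f (x, t, s) (w, 1, 0)
      = fderiv ℝ (fun y => f (y, t, s)) x w + deriv (fun t' => f (x, t', s)) t := by
  have hsplit : ((w, 1, 0) : E × ℝ × ℝ) = (w, 0, 0) + (0, 1, 0) := by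
    simp [Prod.ext_iff]
  rw [hsplit, map_add, partial_x f hf, (hasDerivAt_partial_t f hf).deriv]
  rfl

private lemma fderiv_decomp_s (f : E × ℝ × ℝ → F) {x : E} {t s : ℝ}
    (hf : DifferentiableAt ℝ f (x, t, s)) (w : E) :
    fderiv ℝ f (x, t, s) (w, 0, 1)
      = fderiv ℝ (fun y => f (y, t, s)) x w + deriv (fun s' => f (x, t, s')) s := by
  have hsplit : ((w, 0, 1) : E × ℝ × ℝ) = (w, 0, 0) + (0, 0, 1) := by
    simp [Prod.ext_iff]
  rw [hsplit, map_add, partial_x f hf, (hasDerivAt_partial_s f hf).deriv]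
  rfl

end Helpers

/-- **The compatibility identity characterizes the physics-time velocity.**
Let `Φ` be a `C²` two-parameter flow with `Φ(a,t,0) = a` and sampling-time velocity `v`
(`∂ₛΦ = v ∘ Φ`, `v` of class `C¹`). If `u` is `C¹`, vanishes at `s = 0`, and satisfies the
compatibility identity `∂ₛu + Dₓu[v] = Dₓv[u] + ∂ₜv` for all `(x,t,s)` with `s ∈ [0,1]`,
then `∂ₜΦ(a,t,s) = u(Φ(a,t,s),t,s)` for all `a`, `t` and `s ∈ [0,1]`. -/
theorem compatibility_implies_physics_time_velocity (d : ℕ)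
    (Φ u v : EuclideanSpace ℝ (Fin d) × ℝ × ℝ → EuclideanSpace ℝ (Fin d))
    (hΦ : ContDiff ℝ 2 Φ) (hv : ContDiff ℝ 1 v) (hu : ContDiff ℝ 1 u)
    (hinit : ∀ (a : EuclideanSpace ℝ (Fin d)) (t : ℝ), Φ (a, t, 0) = a)
    (hflow_s : ∀ (a : EuclideanSpace ℝ (Fin d)) (t s : ℝ),
      deriv (fun s' => Φ (a, t, s')) s = v (Φ (a, t, s), t, s))
    (hu0 : ∀ (x : EuclideanSpace ℝ (Fin d)) (t : ℝ), u (x, t, 0) = 0)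
    (hcompat : ∀ (x : EuclideanSpace ℝ (Fin d)) (t : ℝ), ∀ s ∈ Set.Icc (0:ℝ) 1,
      deriv (fun s' => u (x, t, s')) s
          + fderiv ℝ (fun y => u (y, t, s)) x (v (x, t, s)) =
        fderiv ℝ (fun y => v (y, t, s)) x (u (x, t, s))
          + deriv (fun t' => v (x, t', s)) t) :
    ∀ (a : EuclideanSpace ℝ (Fin d)) (t : ℝ), ∀ s ∈ Set.Icc (0:ℝ) 1,
      deriv (fun t' => Φ (a, t', s)) t = u (Φ (a, t, s), t, s) := by
  intro a t s₀ hs₀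
  -- the flow as a function of the two time variables only
  set G : ℝ × ℝ → EuclideanSpace ℝ (Fin d) := fun p => Φ (a, p.1, p.2) with hG_def
  have hG : ContDiff ℝ 2 G := hΦ.comp (contDiff_const.prodMk contDiff_id)
  set H : ℝ × ℝ → (ℝ × ℝ) →L[ℝ] EuclideanSpace ℝ (Fin d) := fderiv ℝ G with hH_def
  have hH : ContDiff ℝ 1 H := hG.fderiv_right (by norm_num)
  have hGdiff : Differentiable ℝ G := hG.differentiable (by norm_num)
  have hvdiff : Differentiable ℝ v := hv.differentiable one_ne_zero
  have hudiff : Differentiable ℝ u := hu.differentiable one_ne_zero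
  -- partial derivatives of G
  have hdt : ∀ t' s' : ℝ, HasDerivAt (fun τ => G (τ, s')) (H (t', s') (1, 0)) t' := by
    intro t' s'
    exact (hGdiff (t', s')).hasFDerivAt.comp_hasDerivAt t'
      ((hasDerivAt_id t').prodMk (hasDerivAt_const t' s'))
  have hds : ∀ t' s' : ℝ, HasDerivAt (fun σ => G (t', σ)) (H (t', s') (0, 1)) s' := by
    intro t' s'
    exact (hGdiff (t', s')).hasFDerivAt.comp_hasDerivAt s'
      (HasDerivAt.prodMk (hasDerivAt_const s' t') (hasDerivAt_id s'))
  have hvG : ∀ t' s' : ℝ, H (t', s') (0, 1) = v (Φ (a, t', s'), t', s') := by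
    intro t' s'
    calc H (t', s') (0, 1) = deriv (fun σ => Φ (a, t', σ)) s' := ((hds t' s').deriv).symm
      _ = v (Φ (a, t', s'), t', s') := hflow_s a t' s'
  -- the two candidate physics-time velocities along the flow
  set w₁ : ℝ → EuclideanSpace ℝ (Fin d) := fun s => H (t, s) (1, 0) with hw₁_def
  set w₂ : ℝ → EuclideanSpace ℝ (Fin d) := fun s => u (Φ (a, t, s), t, s) with hw₂_def
  -- the linear coefficient of the ODE and the inhomogeneity
  set L : ℝ → EuclideanSpace ℝ (Fin d) →L[ℝ] EuclideanSpace ℝ (Fin d) := fun s =>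
    (fderiv ℝ v (Φ (a, t, s), t, s)).comp (ContinuousLinearMap.inl ℝ (EuclideanSpace ℝ (Fin d)) (ℝ × ℝ)) with hL_def
  set b : ℝ → EuclideanSpace ℝ (Fin d) := fun s => deriv (fun t' => v (Φ (a, t, s), t', s)) t with hb_def
  have hLx : ∀ s : ℝ, fderiv ℝ (fun y => v (y, t, s)) (Φ (a, t, s)) = L s := by
    intro s
    exact partial_x v (hvdiff _)
  -- Step 1: w₁ solves the ODE
  have hstep1 : ∀ s : ℝ, HasDerivAt w₁ (L s (w₁ s) + b s) s := by
    intro s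
    have hHs : HasDerivAt (fun σ => H (t, σ)) (fderiv ℝ H (t, s) (0, 1)) s :=
      ((hH.differentiable one_ne_zero) (t, s)).hasFDerivAt.comp_hasDerivAt s
        (HasDerivAt.prodMk (hasDerivAt_const s t) (hasDerivAt_id s))
    have h1 : HasDerivAt w₁ (fderiv ℝ H (t, s) (0, 1) ((1 : ℝ), (0 : ℝ))) s := by
      have := hHs.clm_apply (hasDerivAt_const s ((1 : ℝ), (0 : ℝ)))
      simpa using this
    have hsym : fderiv ℝ H (t, s) (0, 1) ((1 : ℝ), (0 : ℝ))
        = fderiv ℝ H (t, s) ((1 : ℝ), (0 : ℝ)) (0, 1) :=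
      (hG.contDiffAt.isSymmSndFDerivAt (by norm_num)) _ _
    have hHt : HasDerivAt (fun t' => H (t', s)) (fderiv ℝ H (t, s) (1, 0)) t :=
      ((hH.differentiable one_ne_zero) (t, s)).hasFDerivAt.comp_hasDerivAt t
        ((hasDerivAt_id t).prodMk (hasDerivAt_const t s))
    have h2 : HasDerivAt (fun t' => H (t', s) ((0 : ℝ), (1 : ℝ)))
        (fderiv ℝ H (t, s) ((1 : ℝ), (0 : ℝ)) (0, 1)) t := by
      have := hHt.clm_apply (hasDerivAt_const t ((0 : ℝ), (1 : ℝ)))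
      simpa using this
    have h3 : HasDerivAt (fun t' => v (Φ (a, t', s), t', s))
        (fderiv ℝ v (Φ (a, t, s), t, s) (w₁ s, 1, 0)) t := by
      have hc : HasDerivAt (fun t' => ((Φ (a, t', s), t', s) : EuclideanSpace ℝ (Fin d) × ℝ × ℝ))
          ((w₁ s), (1 : ℝ), (0 : ℝ)) t :=
        (hdt t s).prodMk ((hasDerivAt_id t).prodMk (hasDerivAt_const t s))
      exact (hvdiff _).hasFDerivAt.comp_hasDerivAt t hc
    have heqfun : (fun t' => H (t', s) ((0 : ℝ), (1 : ℝ)))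
        = fun t' => v (Φ (a, t', s), t', s) := funext fun t' => hvG t' s
    have hval : fderiv ℝ H (t, s) ((1 : ℝ), (0 : ℝ)) (0, 1)
        = fderiv ℝ v (Φ (a, t, s), t, s) (w₁ s, 1, 0) := by
      have h2' := h2.deriv
      have h3' := h3.deriv
      rw [heqfun] at h2'
      rw [← h2', ← h3']
    have hdec : fderiv ℝ v (Φ (a, t, s), t, s) (w₁ s, 1, 0) = L s (w₁ s) + b s := by
      rw [fderiv_decomp_t v (hvdiff _) (w₁ s), hLx s]
    rw [hsym, hval, hdec] at h1
    exact h1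
  -- Step 2: w₂ solves the same ODE on [0,1]
  have hstep2 : ∀ s ∈ Set.Icc (0:ℝ) 1, HasDerivAt w₂ (L s (w₂ s) + b s) s := by
    intro s hs
    have hφ : HasDerivAt (fun s' => Φ (a, t, s')) (v (Φ (a, t, s), t, s)) s := by
      have := hds t s
      rwa [hvG t s] at this
    have hc : HasDerivAt (fun s' => ((Φ (a, t, s'), t, s') : EuclideanSpace ℝ (Fin d) × ℝ × ℝ))
        (v (Φ (a, t, s), t, s), (0 : ℝ), (1 : ℝ)) s :=
      hφ.prodMk (HasDerivAt.prodMk (hasDerivAt_const s t) (hasDerivAt_id s))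
    have h1 : HasDerivAt w₂ (fderiv ℝ u (Φ (a, t, s), t, s) (v (Φ (a, t, s), t, s), 0, 1)) s :=
      (hudiff _).hasFDerivAt.comp_hasDerivAt s hc
    have hdec : fderiv ℝ u (Φ (a, t, s), t, s) (v (Φ (a, t, s), t, s), 0, 1)
        = L s (w₂ s) + b s := by
      rw [fderiv_decomp_s u (hudiff _) _]
      rw [add_comm, hcompat (Φ (a, t, s)) t s hs, hLx s]
    rw [hdec] at h1
    exact h1
  -- the difference
  set w : ℝ → EuclideanSpace ℝ (Fin d) := fun s => w₁ s - w₂ s with hw_def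
  -- uniform Lipschitz bound for L on [0,1]
  have hzc : Continuous fun s : ℝ => ((Φ (a, t, s), t, s) : EuclideanSpace ℝ (Fin d) × ℝ × ℝ) := by
    refine Continuous.prodMk ?_ (continuous_const.prodMk continuous_id)
    exact hΦ.continuous.comp (continuous_const.prodMk (continuous_const.prodMk continuous_id))
  have hfc : Continuous fun s : ℝ => ‖fderiv ℝ v (Φ (a, t, s), t, s)‖ :=
    ((hv.continuous_fderiv one_ne_zero).comp hzc).norm
  obtain ⟨M, hM⟩ := isCompact_Icc.exists_bound_of_continuousOn
    (f := fun s : ℝ => ‖fderiv ℝ v (Φ (a, t, s), t, s)‖) hfc.continuousOn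
  set K : NNReal := ⟨max M 0, le_max_right _ _⟩ with hK_def
  have hLnorm : ∀ s ∈ Set.Icc (0:ℝ) 1, ∀ x : EuclideanSpace ℝ (Fin d), ‖L s x‖ ≤ K * ‖x‖ := by
    intro s hs x
    have h1 : ‖L s x‖ ≤ ‖fderiv ℝ v (Φ (a, t, s), t, s)‖ * ‖((x, 0, 0) : EuclideanSpace ℝ (Fin d) × ℝ × ℝ)‖ := by
      exact (fderiv ℝ v (Φ (a, t, s), t, s)).le_opNorm _
    have h2 : ‖((x, 0, 0) : EuclideanSpace ℝ (Fin d) × ℝ × ℝ)‖ = ‖x‖ := by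
      simp [Prod.norm_def]
    rw [h2] at h1
    refine h1.trans (mul_le_mul_of_nonneg_right ?_ (norm_nonneg x))
    have := hM s hs
    calc ‖fderiv ℝ v (Φ (a, t, s), t, s)‖
        ≤ M := le_of_abs_le (by simpa using this)
      _ ≤ max M 0 := le_max_left _ _
  -- the clamped vector field
  set proj : ℝ → ℝ := fun s => max 0 (min 1 s) with hproj_def
  have hprojIcc : ∀ s : ℝ, proj s ∈ Set.Icc (0:ℝ) 1 :=
    fun s => ⟨le_max_left _ _, max_le zero_le_one (min_le_left _ _)⟩
  have hprojeq : ∀ s ∈ Set.Ico (0:ℝ) 1, proj s = s := by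
    intro s hs
    simp only [hproj_def]
    rw [min_eq_right hs.2.le, max_eq_right hs.1]
  set V : ℝ → EuclideanSpace ℝ (Fin d) → EuclideanSpace ℝ (Fin d) := fun s x => L (proj s) x with hV_def
  have hVlip : ∀ s : ℝ, LipschitzWith K (V s) := by
    intro s
    refine LipschitzWith.of_dist_le_mul fun x y => ?_
    rw [dist_eq_norm, dist_eq_norm]
    have : V s x - V s y = L (proj s) (x - y) := (map_sub (L (proj s)) x y).symm
    rw [this]
    exact hLnorm (proj s) (hprojIcc s) (x - y)
  -- w solves w' = V s (w s) on [0,1)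
  have hw' : ∀ s ∈ Set.Ico (0:ℝ) 1, HasDerivWithinAt w (V s (w s)) (Set.Ici s) s := by
    intro s hs
    have hs' : s ∈ Set.Icc (0:ℝ) 1 := ⟨hs.1, hs.2.le⟩
    have h := (hstep1 s).sub (hstep2 s hs')
    have hval : L s (w₁ s) + b s - (L s (w₂ s) + b s) = V s (w s) := by
      simp only [hV_def, hprojeq s hs, hw_def, map_sub]
      abel
    rw [hval] at h
    exact h.hasDerivWithinAt
  -- continuity of w on [0,1]
  have hw₁c : Continuous w₁ := continuous_iff_continuousAt.mpr fun s => (hstep1 s).continuousAt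
  have hw₂c : Continuous w₂ := hu.continuous.comp hzc
  have hwc : Continuous w := hw₁c.sub hw₂c
  -- initial condition
  have hw0 : w 0 = 0 := by
    have h10 : w₁ 0 = 0 := by
      have := (hdt t 0).deriv
      have hconst : (fun τ => G (τ, (0:ℝ))) = fun _ => a := funext fun τ => hinit a τ
      rw [hconst] at this
      simp only [hw₁_def]
      rw [← this, deriv_const]
    have h20 : w₂ 0 = 0 := by
      simp only [hw₂_def, hinit a t, hu0]
    simp [hw_def, h10, h20]
  -- uniqueness of ODE solutions: w = 0 on [0,1]
  have hzero : ∀ s ∈ Set.Icc (0:ℝ) 1, w s = 0 := by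
    have hg' : ∀ s ∈ Set.Ico (0:ℝ) 1,
        HasDerivWithinAt (fun _ : ℝ => (0 : EuclideanSpace ℝ (Fin d))) (V s 0) (Set.Ici s) s := by
      intro s _
      have : V s 0 = 0 := map_zero (L (proj s))
      rw [this]
      exact (hasDerivWithinAt_const s _ (0 : EuclideanSpace ℝ (Fin d)))
    have := ODE_solution_unique (v := V) (f := w) (g := fun _ => (0 : EuclideanSpace ℝ (Fin d))) (a := 0) (b := 1)
      hVlip hwc.continuousOn hw' continuous_const.continuousOn hg' (by simpa using hw0)
    exact fun s hs => this hs
  -- conclude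
  have hfinal := hzero s₀ hs₀
  have hderiv : deriv (fun t' => Φ (a, t', s₀)) t = w₁ s₀ := (hdt t s₀).deriv
  rw [hderiv]
  have : w₁ s₀ - w₂ s₀ = 0 := hfinal
  have := sub_eq_zero.mp this
  exact this
end

section
/- Let u, v : E × ℝ × ℝ → E be twice continuously differentiable and satisfy the compatibility identity ∂_s u + D_x u[v] = D_x v[u] + ∂_t v at every (x,t,s). Write J_u(x,t,s) and J_v(x,t,s) for the Jacobian matrices of u and v in the state variable (entries (J_f)_{ij} = ∂_{x_j} f_i), and let H(x,t,s) be the matrix with entries H_{ij} = Σ_k u_k(x,t,s) ∂_{x_k} ∂_{x_j} v_i(x,t,s) (the directional derivative of J_v along u). Then the Jacobian J_u satisfies, at every (x,t,s): ∂_s J_u(x,t,s) + (v(x,t,s)·∇_x) J_u(x,t,s) = ∂_t J_v(x,t,s) + J_v(x,t,s) J_u(x,t,s) − J_u(x,t,s) J_v(x,t,s) + H(x,t,s), where (v·∇_x)J_u denotes the matrix with entries Σ_k v_k ∂_{x_k} (J_u)_{ij}. -/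
noncomputable section

variable {E F : Type*} [NormedAddCommGroup E] [NormedSpace ℝ E]
  [NormedAddCommGroup F] [NormedSpace ℝ F]

/-- Continuous linear inclusion `y ↦ (y, 0, 0)`. -/
def inX : E →L[ℝ] E × ℝ × ℝ := (ContinuousLinearMap.id ℝ E).prod 0

@[simp] lemma inX_apply (y : E) : (inX y : E × ℝ × ℝ) = (y, 0, 0) := rfl

lemma hasFDerivAt_sliceX {f : E × ℝ × ℝ → F} (hf : Differentiable ℝ f) (x : E) (t s : ℝ) :
    HasFDerivAt (fun y => f (y, t, s)) ((fderiv ℝ f (x, t, s)).comp inX) x :=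
  (hf _).hasFDerivAt.comp x (HasFDerivAt.prodMk (hasFDerivAt_id x) (hasFDerivAt_const (t, s) x))

lemma hasDerivAt_sliceS {f : E × ℝ × ℝ → F} (hf : Differentiable ℝ f) (x : E) (t s : ℝ) :
    HasDerivAt (fun s' => f (x, t, s')) (fderiv ℝ f (x, t, s) (0, 0, 1)) s :=
  (hf _).hasFDerivAt.comp_hasDerivAt s
    (HasDerivAt.prodMk (hasDerivAt_const s x) (HasDerivAt.prodMk (hasDerivAt_const s t) (hasDerivAt_id s)))

lemma hasDerivAt_sliceT {f : E × ℝ × ℝ → F} (hf : Differentiable ℝ f) (x : E) (t s : ℝ) :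
    HasDerivAt (fun t' => f (x, t', s)) (fderiv ℝ f (x, t, s) (0, 1, 0)) t :=
  (hf _).hasFDerivAt.comp_hasDerivAt t
    (HasDerivAt.prodMk (hasDerivAt_const t x) (HasDerivAt.prodMk (hasDerivAt_id t) (hasDerivAt_const t s)))

lemma euclid_decomp {d : ℕ} (w : EuclideanSpace ℝ (Fin d)) :
    ∑ k, w k • EuclideanSpace.single k 1 = w := by
  ext l
  rw [WithLp.ofLp_sum, Finset.sum_apply]
  simp [EuclideanSpace.single_apply]

lemma clm_sum {d : ℕ} (φ : EuclideanSpace ℝ (Fin d) →L[ℝ] ℝ) (w : EuclideanSpace ℝ (Fin d)) :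
    ∑ k, w k * φ (EuclideanSpace.single k 1) = φ w := by
  calc ∑ k, w k * φ (EuclideanSpace.single k 1)
      = φ (∑ k, w k • EuclideanSpace.single k 1) := by
        rw [map_sum]
        simp [smul_eq_mul]
    _ = φ w := by rw [euclid_decomp]

end

/-- The `(i,j)` matrix-entry functional on derivatives: `M ↦ (M (eⱼ,0,0))ᵢ`. -/
noncomputable def coordJ {d : ℕ} (i j : Fin d) :
    ((EuclideanSpace ℝ (Fin d) × ℝ × ℝ) →L[ℝ] EuclideanSpace ℝ (Fin d)) →L[ℝ] ℝ :=
  (EuclideanSpace.proj i).comp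
    (ContinuousLinearMap.apply ℝ (EuclideanSpace ℝ (Fin d)) (EuclideanSpace.single j 1, 0, 0))

/-- The state-variable Jacobian matrix of `f : E × ℝ × ℝ → E` at `(x,t,s)`,
with entries `(J_f)_{ij} = ∂_{x_j} f_i(x,t,s)`. -/
noncomputable def stateJac {d : ℕ}
    (f : EuclideanSpace ℝ (Fin d) × ℝ × ℝ → EuclideanSpace ℝ (Fin d))
    (x : EuclideanSpace ℝ (Fin d)) (t s : ℝ) : Matrix (Fin d) (Fin d) ℝ :=
  Matrix.of fun i j => fderiv ℝ (fun y => f (y, t, s)) x (EuclideanSpace.single j 1) i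

/-- **Transport equation for the Jacobian of the physics-time velocity.**
If `u, v` are `C²` and satisfy the compatibility identity
`∂ₛu + Dₓu[v] = Dₓv[u] + ∂ₜv`, then the Jacobians satisfy
`∂ₛJ_u + (v·∇ₓ)J_u = ∂ₜJ_v + J_v J_u − J_u J_v + H`, where
`H_{ij} = Σ_k u_k ∂_{x_k}∂_{x_j} v_i` is the directional derivative of `J_v` along `u`. -/
theorem jacobian_transport_equation (d : ℕ)
    (u v : EuclideanSpace ℝ (Fin d) × ℝ × ℝ → EuclideanSpace ℝ (Fin d))
    (hu : ContDiff ℝ 2 u) (hv : ContDiff ℝ 2 v)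
    (hcompat : ∀ (x : EuclideanSpace ℝ (Fin d)) (t s : ℝ),
      deriv (fun s' => u (x, t, s')) s
          + fderiv ℝ (fun y => u (y, t, s)) x (v (x, t, s)) =
        fderiv ℝ (fun y => v (y, t, s)) x (u (x, t, s))
          + deriv (fun t' => v (x, t', s)) t) :
    ∀ (x : EuclideanSpace ℝ (Fin d)) (t s : ℝ),
      (Matrix.of fun i j => deriv (fun s' => stateJac u x t s' i j) s
          + fderiv ℝ (fun y => stateJac u y t s i j) x (v (x, t, s))) =
        (Matrix.of fun i j => deriv (fun t' => stateJac v x t' s i j) t)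
          + stateJac v x t s * stateJac u x t s
          - stateJac u x t s * stateJac v x t s
          + Matrix.of (fun i j => ∑ k : Fin d, u (x, t, s) k *
              fderiv ℝ (fun y => stateJac v y t s i j) x (EuclideanSpace.single k 1)) := by
  intro x t s
  have hud : Differentiable ℝ u := hu.differentiable two_ne_zero
  have hvd : Differentiable ℝ v := hv.differentiable two_ne_zero
  have hDu : Differentiable ℝ (fderiv ℝ u) :=
    (hu.fderiv_right (m := 1) (by norm_num)).differentiable one_ne_zero
  have hDv : Differentiable ℝ (fderiv ℝ v) :=
    (hv.fderiv_right (m := 1) (by norm_num)).differentiable one_ne_zero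
  -- compatibility in full-space fderiv form
  have key : ∀ (y : EuclideanSpace ℝ (Fin d)) (t' s' : ℝ),
      fderiv ℝ u (y, t', s') (v (y, t', s'), 0, 1) =
      fderiv ℝ v (y, t', s') (u (y, t', s'), 1, 0) := by
    intro y t' s'
    have h1 : deriv (fun s'' => u (y, t', s'')) s' = fderiv ℝ u (y, t', s') (0, 0, 1) :=
      (hasDerivAt_sliceS hud y t' s').deriv
    have h2 : fderiv ℝ (fun z => u (z, t', s')) y (v (y, t', s')) =
        fderiv ℝ u (y, t', s') (v (y, t', s'), 0, 0) := by
      rw [(hasFDerivAt_sliceX hud y t' s').fderiv]; rfl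
    have h3 : fderiv ℝ (fun z => v (z, t', s')) y (u (y, t', s')) =
        fderiv ℝ v (y, t', s') (u (y, t', s'), 0, 0) := by
      rw [(hasFDerivAt_sliceX hvd y t' s').fderiv]; rfl
    have h4 : deriv (fun t'' => v (y, t'', s')) t' = fderiv ℝ v (y, t', s') (0, 1, 0) :=
      (hasDerivAt_sliceT hvd y t' s').deriv
    have hc := hcompat y t' s'
    rw [h1, h2, h3, h4] at hc
    have e1 : ((v (y, t', s') : EuclideanSpace ℝ (Fin d)), (0 : ℝ), (1 : ℝ))
        = (0, 0, 1) + (v (y, t', s'), 0, 0) := by simp [Prod.ext_iff]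
    have e2 : ((u (y, t', s') : EuclideanSpace ℝ (Fin d)), (1 : ℝ), (0 : ℝ))
        = (u (y, t', s'), 0, 0) + (0, 1, 0) := by simp [Prod.ext_iff]
    rw [e1, e2, map_add, map_add]
    exact hc
  have symmU : ∀ a b, fderiv ℝ (fderiv ℝ u) (x, t, s) a b
      = fderiv ℝ (fderiv ℝ u) (x, t, s) b a :=
    second_derivative_symmetric (fun y => (hud y).hasFDerivAt) ((hDu (x, t, s)).hasFDerivAt)
  have symmV : ∀ a b, fderiv ℝ (fderiv ℝ v) (x, t, s) a b
      = fderiv ℝ (fderiv ℝ v) (x, t, s) b a :=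
    second_derivative_symmetric (fun y => (hvd y).hasFDerivAt) ((hDv (x, t, s)).hasFDerivAt)
  -- differentiate the compatibility identity in the state variable
  have hcu : HasFDerivAt (fun y => fderiv ℝ u (y, t, s))
      ((fderiv ℝ (fderiv ℝ u) (x, t, s)).comp inX) x := hasFDerivAt_sliceX hDu x t s
  have hcv : HasFDerivAt (fun y => fderiv ℝ v (y, t, s))
      ((fderiv ℝ (fderiv ℝ v) (x, t, s)).comp inX) x := hasFDerivAt_sliceX hDv x t s
  have hvslice : HasFDerivAt
      (fun y => ((v (y, t, s) : EuclideanSpace ℝ (Fin d)), ((0 : ℝ), (1 : ℝ))))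
      (((fderiv ℝ v (x, t, s)).comp inX).prod 0) x :=
    HasFDerivAt.prodMk (hasFDerivAt_sliceX hvd x t s) (hasFDerivAt_const ((0 : ℝ), (1 : ℝ)) x)
  have huslice : HasFDerivAt
      (fun y => ((u (y, t, s) : EuclideanSpace ℝ (Fin d)), ((1 : ℝ), (0 : ℝ))))
      (((fderiv ℝ u (x, t, s)).comp inX).prod 0) x :=
    HasFDerivAt.prodMk (hasFDerivAt_sliceX hud x t s) (hasFDerivAt_const ((1 : ℝ), (0 : ℝ)) x)
  have hGu : HasFDerivAt (fun y => fderiv ℝ u (y, t, s) (v (y, t, s), 0, 1))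
      ((fderiv ℝ u (x, t, s)).comp (((fderiv ℝ v (x, t, s)).comp inX).prod 0)
        + ((fderiv ℝ (fderiv ℝ u) (x, t, s)).comp inX).flip (v (x, t, s), 0, 1)) x :=
    hcu.clm_apply hvslice
  have hGv : HasFDerivAt (fun y => fderiv ℝ v (y, t, s) (u (y, t, s), 1, 0))
      ((fderiv ℝ v (x, t, s)).comp (((fderiv ℝ u (x, t, s)).comp inX).prod 0)
        + ((fderiv ℝ (fderiv ℝ v) (x, t, s)).comp inX).flip (u (x, t, s), 1, 0)) x :=
    hcv.clm_apply huslice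
  have heq := hGu.unique
    (hGv.congr_of_eventuallyEq (Filter.Eventually.of_forall fun y => key y t s))
  have star : ∀ (i j : Fin d),
      fderiv ℝ u (x, t, s) (fderiv ℝ v (x, t, s) (EuclideanSpace.single j 1, 0, 0), 0, 0) i
        + fderiv ℝ (fderiv ℝ u) (x, t, s) (EuclideanSpace.single j 1, 0, 0)
            (v (x, t, s), 0, 1) i
      = fderiv ℝ v (x, t, s) (fderiv ℝ u (x, t, s) (EuclideanSpace.single j 1, 0, 0), 0, 0) i
        + fderiv ℝ (fderiv ℝ v) (x, t, s) (EuclideanSpace.single j 1, 0, 0)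
            (u (x, t, s), 1, 0) i := by
    intro i j
    have h := congrArg (fun (D : EuclideanSpace ℝ (Fin d) →L[ℝ] EuclideanSpace ℝ (Fin d)) =>
      D (EuclideanSpace.single j 1) i) heq
    simpa [ContinuousLinearMap.add_apply, ContinuousLinearMap.comp_apply,
      ContinuousLinearMap.flip_apply, ContinuousLinearMap.prod_apply,
      PiLp.add_apply, Prod.mk_zero_zero] using h
  -- entrywise identification of all terms in the goal
  have hsj : ∀ (f : EuclideanSpace ℝ (Fin d) × ℝ × ℝ → EuclideanSpace ℝ (Fin d)),
      Differentiable ℝ f → ∀ (x' : EuclideanSpace ℝ (Fin d)) (t' s' : ℝ) (i j : Fin d),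
      stateJac f x' t' s' i j
        = fderiv ℝ f (x', t', s') (EuclideanSpace.single j 1, 0, 0) i := by
    intro f hf x' t' s' i j
    show (fderiv ℝ (fun y => f (y, t', s')) x' (EuclideanSpace.single j 1)) i = _
    rw [(hasFDerivAt_sliceX hf x' t' s').fderiv]
    rfl
  have ha : ∀ (i j : Fin d), deriv (fun s' => stateJac u x t s' i j) s
      = fderiv ℝ (fderiv ℝ u) (x, t, s) (0, 0, 1) (EuclideanSpace.single j 1, 0, 0) i := by
    intro i j
    have hfun : (fun s' => stateJac u x t s' i j)
        = fun s' => coordJ i j (fderiv ℝ u (x, t, s')) := by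
      funext s'
      rw [hsj u hud]
      rfl
    have hder := ((coordJ i j).hasFDerivAt.comp_hasDerivAt s (hasDerivAt_sliceS hDu x t s)).deriv
    simp only [Function.comp_def] at hder
    rw [hfun, hder]
    rfl
  have hb : ∀ (i j : Fin d), fderiv ℝ (fun y => stateJac u y t s i j) x (v (x, t, s))
      = fderiv ℝ (fderiv ℝ u) (x, t, s) (v (x, t, s), 0, 0)
          (EuclideanSpace.single j 1, 0, 0) i := by
    intro i j
    have hfun : (fun y => stateJac u y t s i j)
        = fun y => coordJ i j (fderiv ℝ u (y, t, s)) := by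
      funext y
      rw [hsj u hud]
      rfl
    have hder := ((coordJ i j).hasFDerivAt.comp x (hasFDerivAt_sliceX hDu x t s)).fderiv
    simp only [Function.comp_def] at hder
    rw [hfun, hder]
    rfl
  have hc' : ∀ (i j : Fin d), deriv (fun t' => stateJac v x t' s i j) t
      = fderiv ℝ (fderiv ℝ v) (x, t, s) (0, 1, 0) (EuclideanSpace.single j 1, 0, 0) i := by
    intro i j
    have hfun : (fun t' => stateJac v x t' s i j)
        = fun t' => coordJ i j (fderiv ℝ v (x, t', s)) := by
      funext t'
      rw [hsj v hvd]
      rfl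
    have hder := ((coordJ i j).hasFDerivAt.comp_hasDerivAt t (hasDerivAt_sliceT hDv x t s)).deriv
    simp only [Function.comp_def] at hder
    rw [hfun, hder]
    rfl
  have hd : ∀ (i j : Fin d),
      (∑ k : Fin d, u (x, t, s) k *
        fderiv ℝ (fun y => stateJac v y t s i j) x (EuclideanSpace.single k 1))
      = fderiv ℝ (fderiv ℝ v) (x, t, s) (u (x, t, s), 0, 0)
          (EuclideanSpace.single j 1, 0, 0) i := by
    intro i j
    have hfun : (fun y => stateJac v y t s i j)
        = fun y => coordJ i j (fderiv ℝ v (y, t, s)) := by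
      funext y
      rw [hsj v hvd]
      rfl
    have hder := ((coordJ i j).hasFDerivAt.comp x (hasFDerivAt_sliceX hDv x t s)).fderiv
    simp only [Function.comp_def] at hder
    calc (∑ k : Fin d, u (x, t, s) k *
          fderiv ℝ (fun y => stateJac v y t s i j) x (EuclideanSpace.single k 1))
        = ∑ k : Fin d, u (x, t, s) k *
            ((coordJ i j).comp ((fderiv ℝ (fderiv ℝ v) (x, t, s)).comp inX))
              (EuclideanSpace.single k 1) := by
          refine Finset.sum_congr rfl fun k _ => ?_
          rw [hfun, hder]
      _ = _ := by rw [clm_sum]; rfl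
  have he : ∀ (i j : Fin d), (stateJac v x t s * stateJac u x t s) i j
      = fderiv ℝ v (x, t, s)
          (fderiv ℝ u (x, t, s) (EuclideanSpace.single j 1, 0, 0), 0, 0) i := by
    intro i j
    rw [Matrix.mul_apply]
    calc ∑ k : Fin d, stateJac v x t s i k * stateJac u x t s k j
        = ∑ k : Fin d, (fderiv ℝ u (x, t, s) (EuclideanSpace.single j 1, 0, 0)) k *
            ((EuclideanSpace.proj i).comp ((fderiv ℝ v (x, t, s)).comp inX))
              (EuclideanSpace.single k 1) := by
          refine Finset.sum_congr rfl fun k _ => ?_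
          rw [hsj v hvd, hsj u hud, mul_comm]
          rfl
      _ = _ := by rw [clm_sum]; rfl
  have hf' : ∀ (i j : Fin d), (stateJac u x t s * stateJac v x t s) i j
      = fderiv ℝ u (x, t, s)
          (fderiv ℝ v (x, t, s) (EuclideanSpace.single j 1, 0, 0), 0, 0) i := by
    intro i j
    rw [Matrix.mul_apply]
    calc ∑ k : Fin d, stateJac u x t s i k * stateJac v x t s k j
        = ∑ k : Fin d, (fderiv ℝ v (x, t, s) (EuclideanSpace.single j 1, 0, 0)) k *
            ((EuclideanSpace.proj i).comp ((fderiv ℝ u (x, t, s)).comp inX))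
              (EuclideanSpace.single k 1) := by
          refine Finset.sum_congr rfl fun k _ => ?_
          rw [hsj u hud, hsj v hvd, mul_comm]
          rfl
      _ = _ := by rw [clm_sum]; rfl
  have h5 : ∀ (i j : Fin d),
      fderiv ℝ (fderiv ℝ u) (x, t, s) (0, 0, 1) (EuclideanSpace.single j 1, 0, 0) i
        + fderiv ℝ (fderiv ℝ u) (x, t, s) (v (x, t, s), 0, 0)
            (EuclideanSpace.single j 1, 0, 0) i
      = fderiv ℝ (fderiv ℝ u) (x, t, s) (EuclideanSpace.single j 1, 0, 0)
          (v (x, t, s), 0, 1) i := by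
    intro i j
    have e1 : ((v (x, t, s) : EuclideanSpace ℝ (Fin d)), (0 : ℝ), (1 : ℝ))
        = (0, 0, 1) + (v (x, t, s), 0, 0) := by simp [Prod.ext_iff]
    rw [e1, map_add, PiLp.add_apply, symmU (0, 0, 1), symmU (v (x, t, s), 0, 0)]
  have h6 : ∀ (i j : Fin d),
      fderiv ℝ (fderiv ℝ v) (x, t, s) (EuclideanSpace.single j 1, 0, 0)
          (u (x, t, s), 1, 0) i
      = fderiv ℝ (fderiv ℝ v) (x, t, s) (0, 1, 0) (EuclideanSpace.single j 1, 0, 0) i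
        + fderiv ℝ (fderiv ℝ v) (x, t, s) (u (x, t, s), 0, 0)
            (EuclideanSpace.single j 1, 0, 0) i := by
    intro i j
    have e2 : ((u (x, t, s) : EuclideanSpace ℝ (Fin d)), (1 : ℝ), (0 : ℝ))
        = (0, 1, 0) + (u (x, t, s), 0, 0) := by simp [Prod.ext_iff]
    rw [e2, map_add, PiLp.add_apply, symmV (0, 1, 0), symmV (u (x, t, s), 0, 0)]
  apply Matrix.ext
  intro i j
  simp only [Matrix.add_apply, Matrix.sub_apply, Matrix.of_apply]
  rw [ha i j, hb i j, hc' i j, hd i j, he i j, hf' i j]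
  linarith [star i j, h5 i j, h6 i j]
end

section
/- Let S, X ∈ Matrix (Fin d) (Fin d) ℝ with S symmetric positive definite and X symmetric. Then S² commutes with X·S + S·X if and only if S commutes with X. (This expresses that a symmetric positive definite matrix M = S² commutes with its derivative M' = X S + S X, where X = (M^{1/2})', if and only if the square root S = M^{1/2} commutes with its derivative X.) -/
/-!
For `S` positive definite the map `B ↦ S * B + B * S` is injective: pairing with `Bᴴ` under the
trace splits `tr (Bᴴ (S B + B S))` into `tr (Bᴴ S B) + tr (B S Bᴴ)`, a sum of two nonnegative
terms. Since `[S², Z] = S [S, Z] + [S, Z] S`, it follows that `S²` commutes with `Z` iff `S` does.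
Apply this to `Z = X S + S X` and then to `Z = X`, using `[S, X S + S X] = [S², X]`.
-/

open Matrix
open scoped ComplexOrder

theorem commute_mul_add_mul_iff {R : Type*} [Semiring R] [IsCancelAdd R] {a b : R} :
    Commute a (b * a + a * b) ↔ Commute (a * a) b := by
  simp only [Commute, SemiconjBy, mul_add, add_mul, mul_assoc]
  rw [add_comm (a * (b * a)), add_left_inj]

namespace Matrix

variable {n 𝕜 : Type*} [Fintype n] [RCLike 𝕜]

theorem PosDef.eq_zero_of_mul_add_mul_eq_zero {S B : Matrix n n 𝕜} (hS : S.PosDef)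
    (h : S * B + B * S = 0) : B = 0 := by
  have hP := hS.posSemidef.conjTranspose_mul_mul_same B
  have hQ := hS.posSemidef.mul_mul_conjTranspose_same B
  have htrace : (Bᴴ * S * B).trace + (B * S * Bᴴ).trace = 0 := by
    rw [trace_mul_comm (B * S), ← trace_add, mul_assoc, ← mul_add, h, mul_zero, trace_zero]
  have hP0 : Bᴴ * S * B = 0 := hP.trace_eq_zero_iff.mp
    ((add_eq_zero_iff_of_nonneg hP.trace_nonneg hQ.trace_nonneg).mp htrace).1
  refine ext_iff_mulVec.mpr fun x => ?_
  rw [zero_mulVec]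
  by_contra hx
  have hpos := hS.dotProduct_mulVec_pos hx
  rw [star_mulVec, ← dotProduct_mulVec, mulVec_mulVec, mulVec_mulVec, hP0, zero_mulVec,
    dotProduct_zero] at hpos
  exact lt_irrefl 0 hpos

theorem PosDef.commute_mul_self_iff {S Z : Matrix n n 𝕜} (hS : S.PosDef) :
    Commute (S * S) Z ↔ Commute S Z := by
  refine ⟨fun h => ?_, fun h => h.mul_left h⟩
  have hcomm : S * (S * Z - Z * S) + (S * Z - Z * S) * S = 0 :=
    calc S * (S * Z - Z * S) + (S * Z - Z * S) * S = S * S * Z - Z * (S * S) := by noncomm_ring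
      _ = 0 := sub_eq_zero.mpr h.eq
  exact sub_eq_zero.mp (hS.eq_zero_of_mul_add_mul_eq_zero hcomm)

end Matrix

theorem sq_commute_iff_commute_general (d : ℕ)
    (S X : Matrix (Fin d) (Fin d) ℝ)
    (hS : S.PosDef) :
    Commute (S * S) (X * S + S * X) ↔ Commute S X := by
  rw [hS.commute_mul_self_iff, commute_mul_add_mul_iff, hS.commute_mul_self_iff]

/-- **Commutation of `M = S²` with `M' = XS + SX` versus commutation of `S` with `X`.**
For `S` symmetric positive definite and `X` symmetric,
`S²` commutes with `X·S + S·X` if and only if `S` commutes with `X`. -/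
theorem sq_commute_iff_commute (d : ℕ)
    (S X : Matrix (Fin d) (Fin d) ℝ)
    (hS : S.PosDef) (hS_symm : Sᵀ = S) (hX_symm : Xᵀ = X) :
    Commute (S * S) (X * S + S * X) ↔ Commute S X :=
  sq_commute_iff_commute_general d S X hS
end

section
/- Let Σ : ℝ → Matrix (Fin d) (Fin d) ℝ be differentiable with Σ(τ) symmetric positive definite for all τ, let α, β ∈ ℝ with β ≠ 0, and define M(τ) := α² I + β² Σ(τ). Let S : ℝ → Matrix (Fin d) (Fin d) ℝ be differentiable with S(τ) symmetric positive definite and S(τ)² = M(τ) for all τ (the square-root path), and set U(τ) := S'(τ)·S(τ)⁻¹. Then, at any fixed τ, the matrix U(τ) is symmetric if and only if Σ(τ) commutes with Σ'(τ). (This is the symmetry characterization of the physics-time velocity matrix U(t,s) = (∂_t M^{1/2}) M^{-1/2} for Gaussian marginals ρ(t) = N(0, Σ(t)) under a stochastic interpolant with coefficients α(s), β(s).) -/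
open Matrix

/-- If `S` is positive definite, `B` is antisymmetric and `S*B + B*S = 0`, then `B = 0`. -/
private lemma aux_anticommute_zero {d : ℕ} {S B : Matrix (Fin d) (Fin d) ℝ}
    (hS : S.PosDef) (hBt : Bᵀ = -B) (h : S * B + B * S = 0) : B = 0 := by
  have hBS : B * S = -(S * B) := by
    have h' : B * S + S * B = 0 := by rw [add_comm]; exact h
    exact eq_neg_of_add_eq_zero_left h' 
  -- trace of B*S*B is zero
  have ht : trace (B * S * B) = 0 := by
    have h1 := trace_mul_comm (B * S) B
    have h2 : trace (B * (B * S)) = -trace (B * S * B) := by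
      calc trace (B * (B * S)) = trace (B * (-(S * B))) := by rw [hBS]
      _ = -trace (B * (S * B)) := by rw [mul_neg, trace_neg]
      _ = -trace (B * S * B) := by rw [mul_assoc]
    rw [h2] at h1
    linarith
  have htT : trace (Bᵀ * S * B) = 0 := by
    rw [hBt, show -B * S * B = -(B * S * B) by noncomm_ring, trace_neg, ht, neg_zero]
  -- Bᵀ * S * B is positive semidefinite
  have hps : (Bᵀ * S * B).PosSemidef := by
    have := hS.posSemidef.conjTranspose_mul_mul_same B
    rwa [conjTranspose_eq_transpose_of_trivial] at this
  -- each diagonal entry is nonneg and they sum to 0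
  have hdiag : ∀ i, (Bᵀ * S * B) i i = 0 := by
    intro i
    have hnn : ∀ j ∈ Finset.univ, (0:ℝ) ≤ (Bᵀ * S * B) j j := by
      intro j _
      have := hps.dotProduct_mulVec_nonneg (Pi.single j 1)
      simpa [dotProduct, mulVec, Pi.single_apply, Finset.sum_ite_eq,
        mul_comm] using this
    have hsum : ∑ j, (Bᵀ * S * B) j j = 0 := htT
    exact (Finset.sum_eq_zero_iff_of_nonneg hnn).mp hsum i (Finset.mem_univ i)
  -- so each column of B is zero
  ext i j
  by_contra hne
  have hcol : (B *ᵥ Pi.single j 1) ≠ 0 := by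
    intro h0
    have := congrFun h0 i
    simp [mulVec_single] at this
    exact hne this
  have hpos := hS.dotProduct_mulVec_pos hcol
  have heq : star (B *ᵥ Pi.single j 1) ⬝ᵥ S *ᵥ (B *ᵥ Pi.single j 1)
      = star (Pi.single j (1:ℝ)) ⬝ᵥ ((Bᵀ * S * B) *ᵥ Pi.single j 1) := by
    have hT : Bᵀ = Bᴴ := (conjTranspose_eq_transpose_of_trivial B).symm
    rw [hT]
    simp only [star_mulVec, ← mulVec_mulVec, dotProduct_mulVec, vecMul_vecMul]
  have hval : star (Pi.single j (1:ℝ)) ⬝ᵥ ((Bᵀ * S * B) *ᵥ Pi.single j 1) = 0 := by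
    have := hdiag j
    simpa [dotProduct, mulVec, Pi.single_apply, Finset.sum_ite_eq, mul_comm] using this
  rw [heq, hval] at hpos
  exact lt_irrefl _ hpos

/-- **Symmetry of the Gaussian physics-time velocity matrix.**
Let `Σ(τ)` be a differentiable path of symmetric positive definite matrices, `β ≠ 0`,
`M(τ) := α²I + β²Σ(τ)`, and let `S(τ)` be a differentiable path of symmetric positive
definite square roots, `S(τ)² = M(τ)`, with entrywise derivative `S'`. Then for every `τ`,
`U(τ) := S'(τ)·S(τ)⁻¹` is symmetric if and only if `Σ(τ)` commutes with `Σ'(τ)`. -/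
theorem gaussian_velocity_symmetric_iff_commute (d : ℕ)
    (Sigma Sigma' : ℝ → Matrix (Fin d) (Fin d) ℝ)
    (hSigma_deriv : ∀ (i j : Fin d) (τ : ℝ), HasDerivAt (fun τ' => Sigma τ' i j) (Sigma' τ i j) τ)
    (hSigma_pd : ∀ τ : ℝ, (Sigma τ).PosDef)
    (α β : ℝ) (hβ : β ≠ 0)
    (M : ℝ → Matrix (Fin d) (Fin d) ℝ)
    (hM : ∀ τ : ℝ, M τ = α ^ 2 • (1 : Matrix (Fin d) (Fin d) ℝ) + β ^ 2 • Sigma τ)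
    (S S' : ℝ → Matrix (Fin d) (Fin d) ℝ)
    (hS_deriv : ∀ (i j : Fin d) (τ : ℝ), HasDerivAt (fun τ' => S τ' i j) (S' τ i j) τ)
    (hS_pd : ∀ τ : ℝ, (S τ).PosDef)
    (hS_sq : ∀ τ : ℝ, S τ * S τ = M τ) :
    ∀ τ : ℝ, (S' τ * (S τ)⁻¹)ᵀ = S' τ * (S τ)⁻¹ ↔ Sigma τ * Sigma' τ = Sigma' τ * Sigma τ := by
  -- symmetry of S
  have hSsym : ∀ τ, (S τ)ᵀ = S τ := by
    intro τ
    have := (hS_pd τ).isHermitian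
    rwa [IsHermitian, conjTranspose_eq_transpose_of_trivial] at this
  -- symmetry of S'
  have hS'sym : ∀ τ, (S' τ)ᵀ = S' τ := by
    intro τ
    ext i j
    rw [transpose_apply]
    have h1 : HasDerivAt (fun τ' => S τ' j i) (S' τ j i) τ := hS_deriv j i τ
    have h2 : HasDerivAt (fun τ' => S τ' j i) (S' τ i j) τ := by
      have : (fun τ' => S τ' i j) = fun τ' => S τ' j i := by
        funext τ'
        have := congrFun (congrFun (hSsym τ') i) j
        simpa [transpose_apply] using this.symm
      rw [← this]; exact hS_deriv i j τ
    exact h1.unique h2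
  -- product rule: S'·S + S·S' = β² • Σ'
  have hprod : ∀ τ, S' τ * S τ + S τ * S' τ = β ^ 2 • Sigma' τ := by
    intro τ
    ext i j
    have hL : HasDerivAt (fun τ' => M τ' i j) ((S' τ * S τ + S τ * S' τ) i j) τ := by
      have h1 : HasDerivAt (fun τ' => (S τ' * S τ') i j)
          ((S' τ * S τ + S τ * S' τ) i j) τ := by
        have h2 : HasDerivAt (fun τ' => ∑ k, S τ' i k * S τ' k j)
            (∑ k, (S' τ i k * S τ k j + S τ i k * S' τ k j)) τ :=
          HasDerivAt.fun_sum fun k _ => (hS_deriv i k τ).fun_mul (hS_deriv k j τ)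
        have he : (fun τ' => (S τ' * S τ') i j) = fun τ' => ∑ k, S τ' i k * S τ' k j := by
          funext τ'; simp [mul_apply]
        have hv : (S' τ * S τ + S τ * S' τ) i j
            = ∑ k, (S' τ i k * S τ k j + S τ i k * S' τ k j) := by
          simp [mul_apply, Matrix.add_apply, Finset.sum_add_distrib]
        rw [he, hv]; exact h2
      have he : (fun τ' => M τ' i j) = fun τ' => (S τ' * S τ') i j := by
        funext τ'; rw [hS_sq τ']
      rw [he]; exact h1
    have hR : HasDerivAt (fun τ' => M τ' i j) ((β ^ 2 • Sigma' τ) i j) τ := by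
      have h1 : HasDerivAt (fun τ' => α ^ 2 * (1 : Matrix (Fin d) (Fin d) ℝ) i j
          + β ^ 2 * Sigma τ' i j) (β ^ 2 * Sigma' τ i j) τ := by
        simpa using (hasDerivAt_const τ (α ^ 2 * (1 : Matrix (Fin d) (Fin d) ℝ) i j)).fun_add
          ((hSigma_deriv i j τ).const_mul (β ^ 2))
      have he : (fun τ' => M τ' i j) = fun τ' => α ^ 2 * (1 : Matrix (Fin d) (Fin d) ℝ) i j
          + β ^ 2 * Sigma τ' i j := by
        funext τ'; rw [hM τ']; simp [Matrix.add_apply, Matrix.smul_apply, smul_eq_mul]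
      rw [he]
      simpa [Matrix.smul_apply, smul_eq_mul] using h1
    exact hL.unique hR
  intro τ
  set A := S τ with hA
  set A' := S' τ with hA'
  have hApd : A.PosDef := hS_pd τ
  have hAunit : IsUnit A.det := (isUnit_iff_isUnit_det A).mp hApd.isUnit
  have hAinv : A * A⁻¹ = 1 := mul_nonsing_inv A hAunit
  have hinvA : A⁻¹ * A = 1 := nonsing_inv_mul A hAunit
  -- Step 1: U symmetric ↔ A' commutes with A
  have step1 : (A' * A⁻¹)ᵀ = A' * A⁻¹ ↔ A' * A = A * A' := by
    have hUt : (A' * A⁻¹)ᵀ = A⁻¹ * A' := by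
      rw [transpose_mul, transpose_nonsing_inv, hSsym τ, hS'sym τ]
    rw [hUt]
    have e1 : A * (A⁻¹ * A') * A = A' * A := by rw [← mul_assoc, hAinv, one_mul]
    have e2 : A * (A' * A⁻¹) * A = A * A' := by rw [mul_assoc, mul_assoc, hinvA, mul_one]
    have f1 : A⁻¹ * (A' * A) * A⁻¹ = A⁻¹ * A' := by rw [← mul_assoc, mul_assoc, hAinv, mul_one]
    have f2 : A⁻¹ * (A * A') * A⁻¹ = A' * A⁻¹ := by rw [← mul_assoc, hinvA, one_mul]
    constructor
    · intro h
      calc A' * A = A * (A⁻¹ * A') * A := e1.symm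
      _ = A * (A' * A⁻¹) * A := by rw [h]
      _ = A * A' := e2
    · intro h
      calc A⁻¹ * A' = A⁻¹ * (A' * A) * A⁻¹ := f1.symm
      _ = A⁻¹ * (A * A') * A⁻¹ := by rw [h]
      _ = A' * A⁻¹ := f2
  rw [step1]
  -- key ring identity: [A², A'A + AA'] = A*B + B*A with B = [A², A']
  have hkey : (A * A) * (A' * A + A * A') - (A' * A + A * A') * (A * A)
      = A * ((A * A) * A' - A' * (A * A)) + ((A * A) * A' - A' * (A * A)) * A := by
    noncomm_ring
  -- [M, β²Σ'] = β⁴ • [Σ, Σ']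
  have hMM : (A * A) * (β ^ 2 • Sigma' τ) - (β ^ 2 • Sigma' τ) * (A * A)
      = (β ^ 2 * β ^ 2) • (Sigma τ * Sigma' τ - Sigma' τ * Sigma τ) := by
    rw [hS_sq τ, hM τ]
    simp only [add_mul, mul_add, smul_mul_assoc, mul_smul_comm, one_mul, mul_one]
    module
  constructor
  · -- A' commutes with A ⟹ Σ commutes with Σ'
    intro hc
    have hB0 : (A * A) * A' - A' * (A * A) = 0 := by
      have : A' * (A * A) = (A * A) * A' := by
        calc A' * (A * A) = (A' * A) * A := by noncomm_ring
        _ = (A * A') * A := by rw [hc]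
        _ = A * (A' * A) := by noncomm_ring
        _ = A * (A * A') := by rw [hc]
        _ = (A * A) * A' := by noncomm_ring
      rw [this, sub_self]
    have h0 : (β ^ 2 * β ^ 2) • (Sigma τ * Sigma' τ - Sigma' τ * Sigma τ) = 0 := by
      rw [← hMM, ← hprod τ, hkey, hB0]
      simp
    have hβ4 : β ^ 2 * β ^ 2 ≠ 0 := by positivity
    have := (smul_eq_zero.mp h0).resolve_left hβ4
    exact sub_eq_zero.mp this
  · -- Σ commutes with Σ' ⟹ A' commutes with A
    intro hc
    have hMM0 : (A * A) * (β ^ 2 • Sigma' τ) - (β ^ 2 • Sigma' τ) * (A * A) = 0 := by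
      rw [hMM, hc, sub_self, smul_zero]
    have hAB : A * ((A * A) * A' - A' * (A * A)) + ((A * A) * A' - A' * (A * A)) * A = 0 := by
      rw [← hkey, hprod τ]; exact hMM0
    have hBt : ((A * A) * A' - A' * (A * A))ᵀ = -((A * A) * A' - A' * (A * A)) := by
      simp only [transpose_sub, transpose_mul, hA, hA', hSsym τ, hS'sym τ]
      abel
    have hB0 : (A * A) * A' - A' * (A * A) = 0 := aux_anticommute_zero hApd hBt hAB
    -- now C = A*A' - A'*A satisfies A*C + C*A = B = 0
    have hAC : A * (A * A' - A' * A) + (A * A' - A' * A) * A = 0 := by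
      have : A * (A * A' - A' * A) + (A * A' - A' * A) * A
          = (A * A) * A' - A' * (A * A) := by noncomm_ring
      rw [this, hB0]
    have hCt : (A * A' - A' * A)ᵀ = -(A * A' - A' * A) := by
      simp only [transpose_sub, transpose_mul, hA, hA', hSsym τ, hS'sym τ]
      abel
    have hC0 : A * A' - A' * A = 0 := aux_anticommute_zero hApd hCt hAC
    have := sub_eq_zero.mp hC0
    exact this.symm
end

section
/- Let v : E × ℝ × ℝ → E be twice continuously differentiable with div_x v(x,t,s) = 0 for all (x,t,s), let Φ : E × ℝ × ℝ → E be twice continuously differentiable with ∂_s Φ(a,t,s) = v(Φ(a,t,s),t,s) and Φ(a,t,0) = a, and let u : E × ℝ × ℝ → E be twice continuously differentiable satisfying the compatibility identity ∂_s u + D_x u[v] = D_x v[u] + ∂_t v at every (x,t,s), with u(x,t,0) = 0 for all x, t. Then: (i) for every (a,t), the function s ↦ (div_x u)(Φ(a,t,s),t,s) has derivative zero, i.e., the divergence of u is preserved along the flow; and (ii) consequently (div_x u)(Φ(a,t,s),t,s) = 0 for all (a,t,s), so u is divergence-free at every point in the range of the flow. -/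
/-!
Lift `v` and `u` to the vector fields `V = (v, 0, 1)` and `U = (u, 1, 0)` on state-time space
`E × ℝ × ℝ`. The compatibility identity says exactly that `[V, U] = 0`, and the divergences of
`V` and `U` are `divₓ v` and `divₓ u`. For `C²` fields, `div [V, U] = V (div U) - U (div V)`:
the second derivatives are symmetric and the first-order terms form a commutator, which is
traceless. Since `div V = 0`, this gives `V (div U) = 0`. As `s ↦ (Φ(a,t,s), t, s)` is an
integral curve of `V`, `divₓ u` is constant along it, and it vanishes at `s = 0` because
`u(·, t, 0) = 0`.
-/

/-- The divergence in the state variable of `f : E × ℝ × ℝ → E` at `(x,t,s)`: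
the trace of the Fréchet derivative `Dₓ f(x,t,s)`. -/
noncomputable def stateDiv {d : ℕ}
    (f : EuclideanSpace ℝ (Fin d) × ℝ × ℝ → EuclideanSpace ℝ (Fin d))
    (x : EuclideanSpace ℝ (Fin d)) (t s : ℝ) : ℝ :=
  LinearMap.trace ℝ (EuclideanSpace ℝ (Fin d))
    (fderiv ℝ (fun y => f (y, t, s)) x).toLinearMap

open VectorField

section Trace

variable (E : Type*) [NormedAddCommGroup E] [NormedSpace ℝ E] [FiniteDimensional ℝ E]

noncomputable def traceCLM : (E →L[ℝ] E) →L[ℝ] ℝ :=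
  LinearMap.toContinuousLinearMap ((LinearMap.trace ℝ E).comp (ContinuousLinearMap.coeLM ℝ))

variable {E} in
theorem traceCLM_apply (A : E →L[ℝ] E) : traceCLM E A = LinearMap.trace ℝ E A := rfl

end Trace

namespace VectorField

variable {E : Type*} [NormedAddCommGroup E] [NormedSpace ℝ E] {V W : E → E} {x : E}

theorem fderiv_lieBracket (hV : ContDiffAt ℝ 2 V x) (hW : ContDiffAt ℝ 2 W x) :
    fderiv ℝ (lieBracket ℝ V W) x =
      fderiv ℝ (fderiv ℝ W) x (V x) - fderiv ℝ (fderiv ℝ V) x (W x) +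
        ((fderiv ℝ W x).comp (fderiv ℝ V x) - (fderiv ℝ V x).comp (fderiv ℝ W x)) := by
  have hDV := (hV.fderiv_right (m := 1) le_rfl).differentiableAt one_ne_zero
  have hDW := (hW.fderiv_right (m := 1) le_rfl).differentiableAt one_ne_zero
  have hsV := hV.isSymmSndFDerivAt (by simp [minSmoothness_of_isRCLikeNormedField])
  have hsW := hW.isSymmSndFDerivAt (by simp [minSmoothness_of_isRCLikeNormedField])
  rw [lieBracket_eq, fderiv_fun_sub (hDW.clm_apply (hV.differentiableAt two_ne_zero))
    (hDV.clm_apply (hW.differentiableAt two_ne_zero)),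
    fderiv_clm_apply hDW (hV.differentiableAt two_ne_zero),
    fderiv_clm_apply hDV (hW.differentiableAt two_ne_zero)]
  ext ξ
  simp only [sub_apply, add_apply, ContinuousLinearMap.comp_apply,
    ContinuousLinearMap.flip_apply, hsW.eq (V x) ξ, hsV.eq (W x) ξ]
  abel

variable [FiniteDimensional ℝ E]

noncomputable def divergence (V : E → E) (x : E) : ℝ :=
  LinearMap.trace ℝ E (fderiv ℝ V x)

theorem hasFDerivAt_divergence (hV : ContDiffAt ℝ 2 V x) :
    HasFDerivAt (divergence V) ((traceCLM E).comp (fderiv ℝ (fderiv ℝ V) x)) x :=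
  (traceCLM E).hasFDerivAt.comp x
    ((hV.fderiv_right (m := 1) le_rfl).differentiableAt one_ne_zero).hasFDerivAt

theorem divergence_lieBracket (hV : ContDiffAt ℝ 2 V x) (hW : ContDiffAt ℝ 2 W x) :
    divergence (lieBracket ℝ V W) x =
      fderiv ℝ (divergence W) x (V x) - fderiv ℝ (divergence V) x (W x) := by
  rw [(hasFDerivAt_divergence hV).fderiv, (hasFDerivAt_divergence hW).fderiv, divergence,
    fderiv_lieBracket hV hW]
  simp only [ContinuousLinearMap.toLinearMap_add, ContinuousLinearMap.toLinearMap_sub,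
    ContinuousLinearMap.toLinearMap_comp, map_add, map_sub, ContinuousLinearMap.comp_apply,
    traceCLM_apply]
  rw [LinearMap.trace_comp_comm', sub_self, add_zero]

theorem fderiv_divergence_apply_eq_zero_of_lieBracket_eq_zero (hV : ContDiffAt ℝ 2 V x)
    (hW : ContDiffAt ℝ 2 W x) (hVW : lieBracket ℝ V W = 0) (hdivV : divergence V = 0) :
    fderiv ℝ (divergence W) x (V x) = 0 := by
  have h := divergence_lieBracket hV hW
  rw [hVW, hdivV] at h
  simpa [divergence, eq_comm] using h

end VectorField

section Product

variable {E P : Type*} [NormedAddCommGroup E] [NormedSpace ℝ E] [NormedAddCommGroup P]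
  [NormedSpace ℝ P]

theorem fderiv_comp_prodMk_left {G : Type*} [NormedAddCommGroup G] [NormedSpace ℝ G]
    {f : E × P → G} {x : E} {c : P} (hf : DifferentiableAt ℝ f (x, c)) :
    fderiv ℝ (fun y => f (y, c)) x = (fderiv ℝ f (x, c)).comp (ContinuousLinearMap.inl ℝ E P) :=
  (hf.hasFDerivAt.comp x (hasFDerivAt_prodMk_left x c)).fderiv

theorem lieBracket_prodMk_const {f g : E × P → E} {p : E × P} (hf : DifferentiableAt ℝ f p)
    (hg : DifferentiableAt ℝ g p) (a b : P) :
    lieBracket ℝ (fun q => (f q, a)) (fun q => (g q, b)) p =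
      (fderiv ℝ g p (f p, a) - fderiv ℝ f p (g p, b), 0) := by
  simp [lieBracket, hf.fderiv_prodMk, hg.fderiv_prodMk]

theorem divergence_prodMk_const [FiniteDimensional ℝ E] [FiniteDimensional ℝ P] {f : E × P → E}
    {p : E × P} (hf : DifferentiableAt ℝ f p) (c : P) :
    divergence (fun q => (f q, c)) p =
      LinearMap.trace ℝ E ((fderiv ℝ f p).comp (ContinuousLinearMap.inl ℝ E P)) := by
  have hprod : (fderiv ℝ f p).prod 0 = (ContinuousLinearMap.inl ℝ E P).comp (fderiv ℝ f p) := by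
    ext <;> simp
  rw [divergence, hf.fderiv_prodMk (differentiableAt_const c), fderiv_fun_const, Pi.zero_apply,
    hprod, ContinuousLinearMap.toLinearMap_comp, ContinuousLinearMap.toLinearMap_comp,
    LinearMap.trace_comp_comm']

end Product

section StateTimeSpace

variable {E : Type*} [NormedAddCommGroup E] [NormedSpace ℝ E]

theorem fderiv_apply_eq_partials {G : Type*} [NormedAddCommGroup G] [NormedSpace ℝ G]
    {f : E × ℝ × ℝ → G} {x : E} {t s : ℝ} (hf : DifferentiableAt ℝ f (x, t, s)) (w : E)
    (α β : ℝ) :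
    fderiv ℝ f (x, t, s) (w, α, β) =
      fderiv ℝ (fun y => f (y, t, s)) x w + α • deriv (fun t' => f (x, t', s)) t
        + β • deriv (fun s' => f (x, t, s')) s := by
  have ht : HasDerivAt (fun t' => f (x, t', s)) (fderiv ℝ f (x, t, s) (0, 1, 0)) t :=
    hf.hasFDerivAt.comp_hasDerivAt t
      ((hasDerivAt_const t x).prodMk ((hasDerivAt_id t).prodMk (hasDerivAt_const t s)))
  have hs : HasDerivAt (fun s' => f (x, t, s')) (fderiv ℝ f (x, t, s) (0, 0, 1)) s :=
    hf.hasFDerivAt.comp_hasDerivAt s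
      ((hasDerivAt_const s x).prodMk ((hasDerivAt_const s t).prodMk (hasDerivAt_id s)))
  rw [fderiv_comp_prodMk_left hf, ht.deriv, hs.deriv, ContinuousLinearMap.comp_apply,
    ← map_smul, ← map_smul, ← map_add, ← map_add]
  congr 1
  simp

theorem lieBracket_eq_zero_of_compatibility {u v : E × ℝ × ℝ → E} (hu : Differentiable ℝ u)
    (hv : Differentiable ℝ v)
    (hcompat : ∀ (x : E) (t s : ℝ),
      deriv (fun s' => u (x, t, s')) s + fderiv ℝ (fun y => u (y, t, s)) x (v (x, t, s)) =
        fderiv ℝ (fun y => v (y, t, s)) x (u (x, t, s)) + deriv (fun t' => v (x, t', s)) t) :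
    lieBracket ℝ (fun q => (v q, ((0 : ℝ), (1 : ℝ)))) (fun q => (u q, ((1 : ℝ), (0 : ℝ)))) =
      0 := by
  ext1 ⟨x, t, s⟩
  rw [lieBracket_prodMk_const (hv _) (hu _), fderiv_apply_eq_partials (hu _),
    fderiv_apply_eq_partials (hv _)]
  simp only [zero_smul, one_smul, add_zero]
  rw [add_comm, hcompat, sub_self]
  rfl

theorem hasDerivAt_prodMk_of_deriv_eq {Φ : E × ℝ × ℝ → E} {a w : E} {t s : ℝ}
    (hΦ : DifferentiableAt ℝ Φ (a, t, s)) (hflow : deriv (fun s' => Φ (a, t, s')) s = w) :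
    HasDerivAt (fun s' => (Φ (a, t, s'), t, s')) (w, (0 : ℝ), (1 : ℝ)) s := by
  have hΦs : DifferentiableAt ℝ (fun s' => Φ (a, t, s')) s := by fun_prop
  exact (hflow ▸ hΦs.hasDerivAt).prodMk ((hasDerivAt_const s t).prodMk (hasDerivAt_id s))

end StateTimeSpace

theorem stateDiv_eq_divergence {d : ℕ}
    {f : EuclideanSpace ℝ (Fin d) × ℝ × ℝ → EuclideanSpace ℝ (Fin d)}
    {x : EuclideanSpace ℝ (Fin d)} {t s : ℝ} (hf : DifferentiableAt ℝ f (x, t, s)) (c : ℝ × ℝ) :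
    stateDiv f x t s = divergence (fun q => (f q, c)) (x, t, s) := by
  rw [stateDiv, fderiv_comp_prodMk_left hf, divergence_prodMk_const hf]

/-- **Divergence-free sampling-time velocity yields divergence-free physics-time velocity.**
If `v` is `C²` and divergence-free, `Φ` is a `C²` flow of `v` with `Φ(a,t,0) = a`, and `u` is
`C²`, vanishes at `s = 0`, and satisfies the compatibility identity, then (i) the divergence
of `u` is preserved along the flow (`s ↦ (div u)(Φ(a,t,s),t,s)` has derivative zero) and
(ii) `(div u)(Φ(a,t,s),t,s) = 0` for all `(a,t,s)`. -/
theorem div_free_preserved (d : ℕ)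
    (Φ u v : EuclideanSpace ℝ (Fin d) × ℝ × ℝ → EuclideanSpace ℝ (Fin d))
    (hv : ContDiff ℝ 2 v)
    (hv_div : ∀ (x : EuclideanSpace ℝ (Fin d)) (t s : ℝ), stateDiv v x t s = 0)
    (hΦ : ContDiff ℝ 2 Φ)
    (hflow_s : ∀ (a : EuclideanSpace ℝ (Fin d)) (t s : ℝ),
      deriv (fun s' => Φ (a, t, s')) s = v (Φ (a, t, s), t, s))
    (hinit : ∀ (a : EuclideanSpace ℝ (Fin d)) (t : ℝ), Φ (a, t, 0) = a)
    (hu : ContDiff ℝ 2 u)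
    (hu0 : ∀ (x : EuclideanSpace ℝ (Fin d)) (t : ℝ), u (x, t, 0) = 0)
    (hcompat : ∀ (x : EuclideanSpace ℝ (Fin d)) (t s : ℝ),
      deriv (fun s' => u (x, t, s')) s
          + fderiv ℝ (fun y => u (y, t, s)) x (v (x, t, s)) =
        fderiv ℝ (fun y => v (y, t, s)) x (u (x, t, s))
          + deriv (fun t' => v (x, t', s)) t) :
    (∀ (a : EuclideanSpace ℝ (Fin d)) (t s : ℝ),
      deriv (fun s' => stateDiv u (Φ (a, t, s')) t s') s = 0)
    ∧ ∀ (a : EuclideanSpace ℝ (Fin d)) (t s : ℝ),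
      stateDiv u (Φ (a, t, s)) t s = 0 := by
  have hud : Differentiable ℝ u := hu.differentiable two_ne_zero
  have hvd : Differentiable ℝ v := hv.differentiable two_ne_zero
  set V := fun q => (v q, ((0 : ℝ), (1 : ℝ)))
  set U := fun q => (u q, ((1 : ℝ), (0 : ℝ)))
  have hV : ContDiff ℝ 2 V := hv.prodMk contDiff_const
  have hU : ContDiff ℝ 2 U := hu.prodMk contDiff_const
  have hdivV : divergence V = 0 := by
    ext1 ⟨x, t, s⟩
    exact (stateDiv_eq_divergence (hvd _) _).symm.trans (hv_div x t s)
  have hdivU_along_V : ∀ p, fderiv ℝ (divergence U) p (V p) = 0 := fun p =>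
    fderiv_divergence_apply_eq_zero_of_lieBracket_eq_zero hV.contDiffAt hU.contDiffAt
      (lieBracket_eq_zero_of_compatibility hud hvd hcompat) hdivV
  have hflow : ∀ a t s, HasDerivAt (fun s' => stateDiv u (Φ (a, t, s')) t s') 0 s := by
    intro a t s
    have h := (hasFDerivAt_divergence hU.contDiffAt).comp_hasDerivAt s
      (hasDerivAt_prodMk_of_deriv_eq (hΦ.differentiable two_ne_zero _) (hflow_s a t s))
    rw [← (hasFDerivAt_divergence hU.contDiffAt).fderiv, hdivU_along_V] at h
    have hcomp : (fun s' => stateDiv u (Φ (a, t, s')) t s') =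
        divergence U ∘ fun s' => (Φ (a, t, s'), t, s') :=
      funext fun s' => stateDiv_eq_divergence (hud _) _
    exact hcomp ▸ h
  refine ⟨fun a t s => (hflow a t s).deriv, fun a t s => ?_⟩
  rw [is_const_of_deriv_eq_zero (fun s' => (hflow a t s').differentiableAt)
    (fun s' => (hflow a t s').deriv) s 0, hinit]
  simp [stateDiv, hu0]
end
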